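/- arXiv:2302.05009 — 9 statements merged into one kernel-verified Lean document; each statement's English description precedes it below -/
import Mathlib

section
/- With k* defined as the minimum k ∈ [n] such that b2 - Σ_{j=k+1}^n c_j ≥ k·c_{k+1} (where c_1 ≥ ... ≥ c_n ≥ 0 are integers, c_{n+1} = 0, and 1 ≤ b2 ≤ Σ c_j), the quantity r := (b2 - Σ_{j=k*+1}^n c_j)/k* satisfies c_{k*+1} ≤ r ≤ c_{k*}. In particular the equilibrium attack probabilities assigning total mass r to each of the first k* monitoring sets and mass c_j to each set E_{v_j} with j > k* are feasible (each monitoring set receives total attack probability at most its size) and sum to b2. -/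
/-- With `k*` the least element of the defining set, the quantity
`r = (b2 - Σ_{j=k*+1}^n c_j)/k*` satisfies `c_{k*+1} ≤ r ≤ c_{k*}`, and the attack
probabilities assigning mass `r` to each of the first `k*` monitoring sets and `c_i`
to the later ones are feasible and sum to `b2`. -/
theorem attack_probabilities_feasible (n b2 : ℕ) (c : ℕ → ℕ) (hn : 1 ≤ n)
    (hmono : ∀ i j, 1 ≤ i → i ≤ j → j ≤ n → c j ≤ c i) (hcn1 : c (n + 1) = 0)
    (hb2a : 1 ≤ b2) (hb2b : b2 ≤ ∑ j ∈ Finset.Icc 1 n, c j)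
    (k : ℕ) (hk : k = sInf ({m : ℕ | 1 ≤ m ∧ m ≤ n ∧
      (m : ℤ) * (c (m + 1) : ℤ) ≤ (b2 : ℤ) - ∑ j ∈ Finset.Icc (m + 1) n, (c j : ℤ)}))
    (r : ℝ) (hr : r = ((b2 : ℝ) - ∑ j ∈ Finset.Icc (k + 1) n, (c j : ℝ)) / k)
    (q : ℕ → ℝ) (hq : ∀ i, q i = if i ≤ k then r else (c i : ℝ)) :
    ((c (k + 1) : ℝ) ≤ r ∧ r ≤ (c k : ℝ)) ∧
    (∀ i ∈ Finset.Icc 1 n, 0 ≤ q i ∧ q i ≤ (c i : ℝ)) ∧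
    (∑ i ∈ Finset.Icc 1 n, q i = (b2 : ℝ)) := by
  set S : Set ℕ := {m : ℕ | 1 ≤ m ∧ m ≤ n ∧
      (m : ℤ) * (c (m + 1) : ℤ) ≤ (b2 : ℤ) - ∑ j ∈ Finset.Icc (m + 1) n, (c j : ℤ)} with hS
  have hnS : n ∈ S := by
    refine ⟨hn, le_refl n, ?_⟩
    rw [Finset.Icc_eq_empty (by omega), hcn1]
    simp
  have hkmem : k ∈ S := hk ▸ Nat.sInf_mem ⟨n, hnS⟩
  obtain ⟨hk1, hk2, hk3⟩ := hkmem
  -- sum splitting at the bottom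
  have hsplit : ∀ a, a ≤ n → ∑ j ∈ Finset.Icc a n, (c j : ℤ) =
      (c a : ℤ) + ∑ j ∈ Finset.Icc (a + 1) n, (c j : ℤ) := by
    intro a ha
    have h1 : Finset.Icc (a + 1) n = Finset.Ioc a n := by rw [← Finset.Icc_add_one_left_eq_Ioc]
    rw [h1, Finset.Icc_eq_cons_Ioc ha, Finset.sum_cons]
  have hub : (b2 : ℤ) - ∑ j ∈ Finset.Icc (k + 1) n, (c j : ℤ) ≤ (k : ℤ) * (c k : ℤ) := by
    rcases eq_or_lt_of_le hk1 with h1 | h1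
    · -- k = 1
      have hb : (b2 : ℤ) ≤ ∑ j ∈ Finset.Icc 1 n, (c j : ℤ) := by exact_mod_cast hb2b
      rw [hsplit 1 hn] at hb
      rw [← h1] at *
      push_cast
      linarith
    · -- k ≥ 2 : k - 1 is not in S
      have hnm : k - 1 ∉ S := by
        rw [hk]
        exact Nat.notMem_of_lt_sInf (by rw [← hk]; omega)
      simp only [hS, Set.mem_setOf_eq, not_and, not_le] at hnm
      have h2 := hnm (by omega) (by omega)
      have hk' : k - 1 + 1 = k := by omega
      rw [hk'] at h2
      rw [hsplit k hk2] at h2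
      have hcast : ((k - 1 : ℕ) : ℤ) = (k : ℤ) - 1 := by omega
      rw [hcast] at h2
      nlinarith [h2]
  have hkpos : (0 : ℝ) < (k : ℝ) := by exact_mod_cast hk1
  have hsumcast : ((∑ j ∈ Finset.Icc (k + 1) n, (c j : ℤ) : ℤ) : ℝ)
      = ∑ j ∈ Finset.Icc (k + 1) n, (c j : ℝ) := by push_cast; ring
  have hlow : (c (k + 1) : ℝ) ≤ r := by
    rw [hr, le_div_iff₀ hkpos]
    have h3 : (k : ℝ) * (c (k + 1) : ℝ) ≤ (b2 : ℝ) - ∑ j ∈ Finset.Icc (k + 1) n, (c j : ℝ) := by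
      have := hk3
      rw [← hsumcast]
      exact_mod_cast this
    linarith [h3]
  have hhigh : r ≤ (c k : ℝ) := by
    rw [hr, div_le_iff₀ hkpos]
    have h3 : (b2 : ℝ) - ∑ j ∈ Finset.Icc (k + 1) n, (c j : ℝ) ≤ (k : ℝ) * (c k : ℝ) := by
      rw [← hsumcast]
      exact_mod_cast hub
    linarith [h3]
  have hr0 : 0 ≤ r := le_trans (by positivity) hlow
  refine ⟨⟨hlow, hhigh⟩, ?_, ?_⟩
  · intro i hi
    simp only [Finset.mem_Icc] at hi
    rw [hq i]
    by_cases hik : i ≤ k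
    · simp only [hik, if_true]
      refine ⟨hr0, le_trans hhigh ?_⟩
      exact_mod_cast hmono i k hi.1 hik hk2
    · simp only [hik, if_false]
      exact ⟨by positivity, le_refl _⟩
  · have e1 : Finset.Icc 1 n = Finset.Ioc 0 n := by rw [← Finset.Icc_add_one_left_eq_Ioc]; rfl
    have e2 : Finset.Icc 1 k = Finset.Ioc 0 k := by rw [← Finset.Icc_add_one_left_eq_Ioc]; rfl
    have e3 : Finset.Icc (k + 1) n = Finset.Ioc k n := by rw [← Finset.Icc_add_one_left_eq_Ioc]
    have hsum : ∑ i ∈ Finset.Icc 1 k, q i + ∑ i ∈ Finset.Icc (k + 1) n, q i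
        = ∑ i ∈ Finset.Icc 1 n, q i := by
      rw [e1, e2, e3]
      exact Finset.sum_Ioc_consecutive _ (by omega) hk2
    rw [← hsum]
    have h1 : ∑ i ∈ Finset.Icc 1 k, q i = (k : ℝ) * r := by
      rw [Finset.sum_congr rfl (fun i hi => by
        rw [hq i, if_pos (Finset.mem_Icc.mp hi).2])]
      rw [Finset.sum_const, Nat.card_Icc]
      simp [nsmul_eq_mul]
    have h2 : ∑ i ∈ Finset.Icc (k + 1) n, q i = ∑ i ∈ Finset.Icc (k + 1) n, (c i : ℝ) := by
      refine Finset.sum_congr rfl (fun i hi => ?_)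
      have := (Finset.mem_Icc.mp hi).1
      rw [hq i, if_neg (by omega)]
    rw [h1, h2, hr, mul_div_cancel₀ _ (ne_of_gt hkpos)]
    ring
end

section
/- In the network inspection game with mutually disjoint monitoring sets, any strategy profile (σ1*, σ2*) satisfying the detection-probability conditions p_{σ1*}(v_i) = (1/k*)·Σ_{j=1}^{min(b1,k*)} λ_j for i ≤ k*, p_{σ1*}(v_i) = λ_i for k* < i ≤ b1, p_{σ1*}(v_i) = 0 for i > max(b1,k*), and the attack-probability conditions Σ_{e ∈ E_{v_i}} p_{σ2*}(e) = (1/k*)(b2 - Σ_{j=k*+1}^n |E_{v_j}|) for i ≤ k* and = |E_{v_i}| for i > k*, is a Nash equilibrium of the zero-sum game with payoff equal to the expected number of undetected attacks. -/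
open Finset

/-- A sensor positioning: each sensor is placed at a node or left unused (`none`). -/
abbrev Pos (n b1 : ℕ) := Fin b1 → Option (Fin n)

/-- A positioning is valid if no two sensors occupy the same node. -/
def ValidPos {n b1 : ℕ} (s : Pos n b1) : Prop :=
  ∀ j j' : Fin b1, s j = s j' → s j ≠ none → j = j'

/-- The components of the network, grouped by the (mutually disjoint) monitoring
sets `E_{v_i}` of sizes `c i` (0-based indexing: node `i` is `v_{i+1}`). -/
abbrev Component (n : ℕ) (c : Fin n → ℕ) := (i : Fin n) × Fin (c i)

/-- A mixed inspection strategy: a probability distribution over valid positionings. -/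
def MixedInsp (n b1 : ℕ) (σ : Pos n b1 → ℝ) : Prop :=
  (∀ s, 0 ≤ σ s) ∧ (∑ s, σ s = 1) ∧ (∀ s, σ s ≠ 0 → ValidPos s)

/-- A mixed attack strategy with budget `b2`: a distribution over attack plans. -/
def MixedAtk (n b2 : ℕ) (c : Fin n → ℕ) (τ : Finset (Component n c) → ℝ) : Prop :=
  (∀ T, 0 ≤ τ T) ∧ (∑ T, τ T = 1) ∧ (∀ T, τ T ≠ 0 → T.card ≤ b2)

/-- Detection probability of node `i` under the mixed inspection strategy `σ`. -/
noncomputable def detProb {n b1 : ℕ} (lam : Fin b1 → ℝ) (σ : Pos n b1 → ℝ) (i : Fin n) : ℝ :=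
  ∑ s, σ s * ∑ j, if s j = some i then lam j else 0

/-- Total attack probability mass placed on monitoring set `i` under `τ`,
i.e. `Σ_{e ∈ E_{v_i}} p_τ(e)`. -/
noncomputable def atkProb {n : ℕ} {c : Fin n → ℕ} (τ : Finset (Component n c) → ℝ) (i : Fin n) : ℝ :=
  ∑ T, τ T * ((T.filter (fun e => e.1 = i)).card : ℝ)

/-- Expected number of undetected attacks; with mutually disjoint monitoring sets and
independent players' randomizations it equals `Σ_i q_i (1 - p_i)`. -/
noncomputable def U {n b1 : ℕ} (c : Fin n → ℕ) (lam : Fin b1 → ℝ)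
    (σ : Pos n b1 → ℝ) (τ : Finset (Component n c) → ℝ) : ℝ :=
  ∑ i, atkProb τ i * (1 - detProb lam σ i)

/-- `Σ_{j=k+1}^n |E_{v_j}|` (1-based), i.e. sum of sizes with 0-based index `≥ k`. -/
def tailZ (n : ℕ) (c : Fin n → ℕ) (k : ℕ) : ℤ :=
  ∑ j ∈ Finset.univ.filter (fun j : Fin n => k ≤ (j : ℕ)), (c j : ℤ)

/-- `|E_{v_{k+1}}|` (1-based), with the convention `|E_{v_{n+1}}| = 0`. -/
def cext (n : ℕ) (c : Fin n → ℕ) (k : ℕ) : ℤ :=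
  if h : k < n then (c ⟨k, h⟩ : ℤ) else 0

/-- `k* = min { k ∈ [n] : b2 - Σ_{j=k+1}^n |E_{v_j}| ≥ k·|E_{v_{k+1}}| }`. -/
noncomputable def kstar (n b2 : ℕ) (c : Fin n → ℕ) : ℕ :=
  sInf {k | 1 ≤ k ∧ k ≤ n ∧ (k : ℤ) * cext n c k ≤ (b2 : ℤ) - tailZ n c k}

/-- The value formula of Theorem 1:
`b2 - Σ_{i=1}^{b1} λ_i · min(|E_{v_i}|, (1/k*)(b2 - Σ_{j=k*+1}^n |E_{v_j}|))`. -/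
noncomputable def valueFormula (n b1 b2 : ℕ) (c : Fin n → ℕ) (lam : Fin b1 → ℝ) : ℝ :=
  (b2 : ℝ) - ∑ j : Fin b1, lam j *
    min ((cext n c (j : ℕ) : ℝ))
      (((b2 : ℝ) - (tailZ n c (kstar n b2 c) : ℝ)) / (kstar n b2 c))


-- Lemma A: antitone nonneg sum bound
lemma auxA (g : ℕ → ℝ) (hg : Antitone g) (hg0 : ∀ m, 0 ≤ g m)
    (A : Finset ℕ) : ∑ a ∈ A, g a ≤ ∑ m ∈ Finset.range A.card, g m := by
  obtain ⟨k, hcard⟩ : ∃ k, A.card = k := ⟨_, rfl⟩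
  rw [hcard]
  induction k generalizing A with
  | zero => simp [Finset.card_eq_zero.mp hcard]
  | succ k ih =>
    have hne : A.Nonempty := Finset.card_pos.mp (by omega)
    set a := A.max' hne with ha_def
    have ha : a ∈ A := A.max'_mem hne
    have hsub : A ⊆ Finset.range (a+1) := fun x hx =>
      Finset.mem_range.mpr (Nat.lt_succ_of_le (A.le_max' x hx))
    have hcard2 : k ≤ a := by
      have := Finset.card_le_card hsub
      simp only [Finset.card_range] at this; omega
    have herase : (A.erase a).card = k := by rw [Finset.card_erase_of_mem ha, hcard]; omega
    calc ∑ x ∈ A, g x = ∑ x ∈ A.erase a, g x + g a := by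
          rw [Finset.sum_erase_add _ _ ha]
      _ ≤ ∑ m ∈ Finset.range k, g m + g k := by
          exact add_le_add (ih (A.erase a) herase) (hg hcard2)
      _ = ∑ m ∈ Finset.range (k+1), g m := (Finset.sum_range_succ g k).symm

-- Lemma B: comparison with antitone nonneg weights
lemma auxB (N : ℕ) (l r g : ℕ → ℝ) (hl : Antitone l) (hl0 : ∀ m, 0 ≤ l m)
    (h : ∀ m ≤ N, ∑ j ∈ Finset.range m, r j ≤ ∑ j ∈ Finset.range m, g j) :
    ∑ j ∈ Finset.range N, l j * r j ≤ ∑ j ∈ Finset.range N, l j * g j := by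
  have key : ∀ m ≤ N, l m * (∑ j ∈ Finset.range m, g j - ∑ j ∈ Finset.range m, r j)
      ≤ ∑ j ∈ Finset.range m, l j * (g j - r j) := by
    intro m hm
    induction m with
    | zero => simp
    | succ k ihk =>
      have ih := ihk (by omega)
      have hgap : 0 ≤ ∑ j ∈ Finset.range (k+1), g j - ∑ j ∈ Finset.range (k+1), r j := by
        have := h (k+1) hm; linarith
      rw [Finset.sum_range_succ r, Finset.sum_range_succ g, Finset.sum_range_succ (fun j => l j * (g j - r j))]
      have h1 : l (k+1) * ((∑ j ∈ Finset.range k, g j + g k) - (∑ j ∈ Finset.range k, r j + r k))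
          ≤ l k * ((∑ j ∈ Finset.range k, g j + g k) - (∑ j ∈ Finset.range k, r j + r k)) := by
        apply mul_le_mul_of_nonneg_right (hl (Nat.le_succ k))
        rw [Finset.sum_range_succ r, Finset.sum_range_succ g] at hgap
        linarith
      nlinarith [ih]
  have h1 := key N le_rfl
  have h2 : 0 ≤ l N * (∑ j ∈ Finset.range N, g j - ∑ j ∈ Finset.range N, r j) :=
    mul_nonneg (hl0 N) (by have := h N le_rfl; linarith)
  have h3 : ∑ j ∈ Finset.range N, l j * (g j - r j)
      = ∑ j ∈ Finset.range N, l j * g j - ∑ j ∈ Finset.range N, l j * r j := by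
    rw [← Finset.sum_sub_distrib]; apply Finset.sum_congr rfl; intros; ring
  rw [h3] at h1
  linarith

-- card of filter < m on Fin N
lemma auxCard (N m : ℕ) (h : m ≤ N) :
    (Finset.univ.filter (fun j : Fin N => (j : ℕ) < m)).card = m := by
  have he : Finset.univ.filter (fun j : Fin N => (j : ℕ) < m)
      = (Finset.range m).attachFin (fun x hx => lt_of_lt_of_le (Finset.mem_range.mp hx) h) := by
    ext j; simp [Finset.mem_attachFin]
  rw [he, Finset.card_attachFin, Finset.card_range]

/-- **Theorem 1.** With mutually disjoint monitoring sets, any strategy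
profile satisfying the detection-probability conditions (1) and attack-probability
conditions (2) is a Nash equilibrium of the zero-sum game whose payoff is the expected
number of undetected attacks. -/
theorem disjoint_NE (n b1 b2 : ℕ) (hn : 1 ≤ n) (hb1n : b1 ≤ n)
    (c : Fin n → ℕ) (hc : Antitone c) (hcpos : ∀ i, 1 ≤ c i)
    (lam : Fin b1 → ℝ) (hlam : Antitone lam) (hlam01 : ∀ j, 0 < lam j ∧ lam j ≤ 1)
    (hb2 : 1 ≤ b2) (hb2E : b2 ≤ ∑ i, c i)
    (σs : Pos n b1 → ℝ) (τs : Finset (Component n c) → ℝ)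
    (hσs : MixedInsp n b1 σs) (hτs : MixedAtk n b2 c τs)
    (hdet1 : ∀ i : Fin n, (i : ℕ) < kstar n b2 c →
      detProb lam σs i =
        (∑ j ∈ Finset.univ.filter (fun j : Fin b1 => (j : ℕ) < kstar n b2 c), lam j) /
          (kstar n b2 c))
    (hdet2 : ∀ i : Fin n, ∀ h : (i : ℕ) < b1, kstar n b2 c ≤ (i : ℕ) →
      detProb lam σs i = lam ⟨(i : ℕ), h⟩)
    (hdet3 : ∀ i : Fin n, max b1 (kstar n b2 c) ≤ (i : ℕ) → detProb lam σs i = 0)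
    (hatk1 : ∀ i : Fin n, (i : ℕ) < kstar n b2 c →
      atkProb τs i = ((b2 : ℝ) - (tailZ n c (kstar n b2 c) : ℝ)) / (kstar n b2 c))
    (hatk2 : ∀ i : Fin n, kstar n b2 c ≤ (i : ℕ) → atkProb τs i = (c i : ℝ)) :
    (∀ τ, MixedAtk n b2 c τ → U c lam σs τ ≤ U c lam σs τs) ∧
    (∀ σ, MixedInsp n b1 σ → U c lam σs τs ≤ U c lam σ τs) := by
  classical
  obtain ⟨hσ0, hσ1, hσv⟩ := hσs
  obtain ⟨hτ0, hτ1, hτb⟩ := hτs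
  set K := kstar n b2 c with hKdef
  have hKmem : 1 ≤ K ∧ K ≤ n ∧ (K : ℤ) * cext n c K ≤ (b2 : ℤ) - tailZ n c K := by
    have hne : n ∈ {k | 1 ≤ k ∧ k ≤ n ∧ (k : ℤ) * cext n c k ≤ (b2 : ℤ) - tailZ n c k} := by
      refine ⟨hn, le_rfl, ?_⟩
      have h1 : cext n c n = 0 := by simp [cext]
      have h2 : tailZ n c n = 0 := by
        unfold tailZ
        rw [Finset.filter_false_of_mem, Finset.sum_empty]
        intro j _
        simpa using j.isLt
      rw [h1, h2, mul_zero, sub_zero]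
      positivity
    exact Nat.sInf_mem ⟨n, hne⟩
  obtain ⟨hK1, hKn, hKle⟩ := hKmem
  have hK0 : (0:ℝ) < (K:ℝ) := by exact_mod_cast hK1
  set qs : ℝ := ((b2:ℝ) - (tailZ n c K : ℝ)) / K with hqs_def
  have hcext0 : (0:ℤ) ≤ cext n c K := by unfold cext; split <;> positivity
  have hqs_ge : ((cext n c K : ℤ) : ℝ) ≤ qs := by
    rw [hqs_def, le_div_iff₀ hK0]
    have h := hKle
    have h2 : ((K : ℤ) * cext n c K : ℝ) ≤ (((b2 : ℤ) - tailZ n c K : ℤ) : ℝ) := by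
      exact_mod_cast h
    push_cast at h2 ⊢
    linarith
  have hqs0 : 0 ≤ qs := le_trans (by exact_mod_cast hcext0) hqs_ge
  set Q : Fin n → ℝ := fun i => if (i:ℕ) < K then qs else (c i : ℝ) with hQdef
  have hQlt : ∀ i : Fin n, (i:ℕ) < K → Q i = qs := by
    intro i h; simp only [hQdef]; rw [if_pos h]
  have hQge : ∀ i : Fin n, K ≤ (i:ℕ) → Q i = (c i : ℝ) := by
    intro i h; simp only [hQdef]; rw [if_neg (not_lt.mpr h)]
  have hQatk : ∀ i, atkProb τs i = Q i := by
    intro i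
    by_cases h : (i:ℕ) < K
    · rw [hQlt i h]; exact hatk1 i h
    · rw [hQge i (le_of_not_gt h)]; exact hatk2 i (le_of_not_gt h)
  have hqs_ge_c : ∀ i : Fin n, K ≤ (i:ℕ) → (c i : ℝ) ≤ qs := by
    intro i hi
    have hKn' : K < n := lt_of_le_of_lt hi i.isLt
    have h1 : cext n c K = (c ⟨K, hKn'⟩ : ℤ) := by rw [cext, dif_pos hKn']
    have h2 : c i ≤ c ⟨K, hKn'⟩ := hc (by rw [Fin.le_def]; exact hi)
    have h3 : ((c ⟨K, hKn'⟩ : ℕ) : ℝ) ≤ qs := by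
      have h4 := hqs_ge
      rw [h1] at h4
      exact_mod_cast h4
    exact le_trans (by exact_mod_cast h2) h3
  have hQ0 : ∀ i, 0 ≤ Q i := by
    intro i
    by_cases h : (i:ℕ) < K
    · rw [hQlt i h]; exact hqs0
    · rw [hQge i (le_of_not_gt h)]; positivity
  have hQsum : ∑ i, Q i = (b2:ℝ) := by
    rw [← Finset.sum_filter_add_sum_filter_not Finset.univ (fun i : Fin n => (i:ℕ) < K) Q]
    have e1 : ∑ i ∈ Finset.univ.filter (fun i : Fin n => (i:ℕ) < K), Q i = K * qs := by
      rw [Finset.sum_congr rfl (fun i hi => hQlt i (by simpa using hi)),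
        Finset.sum_const, auxCard n K hKn, nsmul_eq_mul]
    have e2 : ∑ i ∈ Finset.univ.filter (fun i : Fin n => ¬ (i:ℕ) < K), Q i
        = ((tailZ n c K : ℤ) : ℝ) := by
      rw [Finset.sum_congr rfl (fun i hi => hQge i (by simpa [not_lt] using (Finset.mem_filter.mp hi).2))]
      unfold tailZ
      push_cast
      apply Finset.sum_congr _ (fun _ _ => rfl)
      ext i; simp [not_lt]
    rw [e1, e2, hqs_def]
    field_simp
    ring
  set P : ℝ := (∑ j ∈ Finset.univ.filter (fun j : Fin b1 => (j : ℕ) < K), lam j) / (K:ℝ)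
    with hPdef
  have hlam_sum_nonneg : 0 ≤ ∑ j ∈ Finset.univ.filter (fun j : Fin b1 => (j : ℕ) < K), lam j :=
    Finset.sum_nonneg fun j _ => (hlam01 j).1.le
  have hP0 : 0 ≤ P := div_nonneg hlam_sum_nonneg hK0.le
  have hP1 : P ≤ 1 := by
    rw [hPdef, div_le_one hK0]
    have hcard : ((Finset.univ.filter (fun j : Fin b1 => (j : ℕ) < K)).card : ℝ) ≤ (K:ℝ) := by
      have : (Finset.univ.filter (fun j : Fin b1 => (j : ℕ) < K)).card ≤ (Finset.range K).card :=
        Finset.card_le_card_of_injOn (fun j => (j:ℕ))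
          (fun j hj => Finset.mem_range.mpr (by simpa using hj))
          (fun x _ y _ h => Fin.ext h)
      rw [Finset.card_range] at this
      exact_mod_cast this
    calc ∑ j ∈ Finset.univ.filter (fun j : Fin b1 => (j : ℕ) < K), lam j
        ≤ ∑ j ∈ Finset.univ.filter (fun j : Fin b1 => (j : ℕ) < K), 1 :=
          Finset.sum_le_sum fun j _ => (hlam01 j).2
      _ = ((Finset.univ.filter (fun j : Fin b1 => (j : ℕ) < K)).card : ℝ) := by simp
      _ ≤ (K:ℝ) := hcard
  have hlam_le_P : ∀ i : Fin b1, K ≤ (i:ℕ) → lam i ≤ P := by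
    intro i hi
    have hKb1 : K ≤ b1 := le_trans hi (le_of_lt i.isLt)
    rw [hPdef, le_div_iff₀ hK0]
    have h1 : ∑ j ∈ Finset.univ.filter (fun j : Fin b1 => (j : ℕ) < K), lam i
        ≤ ∑ j ∈ Finset.univ.filter (fun j : Fin b1 => (j : ℕ) < K), lam j := by
      apply Finset.sum_le_sum
      intro j hj
      apply hlam
      rw [Fin.le_def]
      have := Finset.mem_filter.mp hj
      omega
    rw [Finset.sum_const, auxCard b1 K hKb1, nsmul_eq_mul] at h1
    linarith
  have hdet_le_P : ∀ i : Fin n, K ≤ (i:ℕ) → detProb lam σs i ≤ P := by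
    intro i hi
    by_cases h : (i:ℕ) < b1
    · rw [hdet2 i h hi]; exact hlam_le_P ⟨i, h⟩ hi
    · rw [hdet3 i (max_le (le_of_not_gt h) hi)]; exact hP0
  constructor
  · -- attacker side
    intro τ hτ
    obtain ⟨ht0, ht1, htb⟩ := hτ
    have hq0 : ∀ i, 0 ≤ atkProb τ i := fun i =>
      Finset.sum_nonneg fun T _ => mul_nonneg (ht0 T) (by positivity)
    have hfib : ∀ i : Fin n,
        (Finset.univ.filter (fun e : Component n c => e.1 = i)).card = c i := by
      intro i
      rw [Finset.card_filter, ← Finset.univ_sigma_univ, Finset.sum_sigma]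
      simp [apply_ite Finset.card, Finset.sum_ite_eq]
    have hqc : ∀ i, atkProb τ i ≤ (c i : ℝ) := by
      intro i
      unfold atkProb
      calc ∑ T, τ T * ((T.filter (fun e => e.1 = i)).card : ℝ)
          ≤ ∑ T : Finset (Component n c), τ T * (c i : ℝ) := by
            apply Finset.sum_le_sum
            intro T _
            apply mul_le_mul_of_nonneg_left _ (ht0 T)
            have h1 : (T.filter (fun e => e.1 = i)).card
                ≤ (Finset.univ.filter (fun e : Component n c => e.1 = i)).card :=
              Finset.card_le_card (Finset.filter_subset_filter _ (Finset.subset_univ T))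
            rw [hfib i] at h1
            exact_mod_cast h1
        _ = (c i : ℝ) := by rw [← Finset.sum_mul, ht1, one_mul]
    have hqsum : ∑ i, atkProb τ i ≤ (b2 : ℝ) := by
      unfold atkProb
      rw [Finset.sum_comm]
      calc ∑ T : Finset (Component n c), ∑ i, τ T * ((T.filter (fun e => e.1 = i)).card : ℝ)
          = ∑ T : Finset (Component n c), τ T * (T.card : ℝ) := by
            apply Finset.sum_congr rfl
            intro T _
            rw [← Finset.mul_sum]
            congr 1
            rw [← Nat.cast_sum]
            congr 1
            exact (Finset.card_eq_sum_card_fiberwise (fun e _ => Finset.mem_univ e.1)).symm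
        _ ≤ ∑ T : Finset (Component n c), τ T * (b2:ℝ) := by
            apply Finset.sum_le_sum
            intro T _
            by_cases hz : τ T = 0
            · simp [hz]
            · exact mul_le_mul_of_nonneg_left (by exact_mod_cast htb T hz) (ht0 T)
        _ = (b2:ℝ) := by rw [← Finset.sum_mul, ht1, one_mul]
    have key : 0 ≤ ∑ i, (Q i - atkProb τ i) * (1 - detProb lam σs i) := by
      have hsplit : ∀ i ∈ Finset.univ, (Q i - atkProb τ i) * (1 - detProb lam σs i)
          = (Q i - atkProb τ i) * (P - detProb lam σs i)
            + (Q i - atkProb τ i) * (1 - P) := by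
        intro i _; ring
      rw [Finset.sum_congr rfl hsplit, Finset.sum_add_distrib]
      have t1 : 0 ≤ ∑ i, (Q i - atkProb τ i) * (P - detProb lam σs i) := by
        apply Finset.sum_nonneg
        intro i _
        by_cases h : (i:ℕ) < K
        · rw [hdet1 i h]
          simp
        · apply mul_nonneg
          · rw [hQge i (le_of_not_gt h)]; linarith [hqc i]
          · linarith [hdet_le_P i (le_of_not_gt h)]
      have t2 : 0 ≤ ∑ i, (Q i - atkProb τ i) * (1 - P) := by
        rw [← Finset.sum_mul]
        apply mul_nonneg
        · rw [Finset.sum_sub_distrib, hQsum]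
          linarith [hqsum]
        · linarith
      linarith
    unfold U
    rw [Finset.sum_congr rfl (fun i (_ : i ∈ Finset.univ) => by
      rw [hQatk i] : ∀ i ∈ Finset.univ,
        atkProb τs i * (1 - detProb lam σs i) = Q i * (1 - detProb lam σs i))]
    have expand : ∑ i, (Q i - atkProb τ i) * (1 - detProb lam σs i)
        = ∑ i, Q i * (1 - detProb lam σs i)
          - ∑ i, atkProb τ i * (1 - detProb lam σs i) := by
      rw [← Finset.sum_sub_distrib]
      apply Finset.sum_congr rfl
      intros; ring
    rw [expand] at key
    linarith
  · -- defender side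
    intro σ hσ
    obtain ⟨hs0, hs1, hsv⟩ := hσ
    set lamE : ℕ → ℝ := fun m => if h : m < b1 then lam ⟨m, h⟩ else 0 with hlamE_def
    set QE : ℕ → ℝ := fun m => if h : m < n then Q ⟨m, h⟩ else 0 with hQE_def
    have hlamE0 : ∀ m, 0 ≤ lamE m := by
      intro m
      simp only [hlamE_def]
      split
      · exact (hlam01 _).1.le
      · exact le_rfl
    have hlamE_anti : Antitone lamE := by
      intro a b hab
      by_cases hb : b < b1
      · have ha : a < b1 := lt_of_le_of_lt hab hb
        simp only [hlamE_def, dif_pos ha, dif_pos hb]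
        exact hlam (Fin.mk_le_mk.mpr hab)
      · simp only [hlamE_def, dif_neg hb]
        exact hlamE0 a
    have hQE0 : ∀ m, 0 ≤ QE m := by
      intro m
      simp only [hQE_def]
      split
      · exact hQ0 _
      · exact le_rfl
    have hQE_anti : Antitone QE := by
      intro a b hab
      by_cases hb : b < n
      · have ha : a < n := lt_of_le_of_lt hab hb
        simp only [hQE_def, dif_pos ha, dif_pos hb]
        by_cases hbK : b < K
        · rw [hQlt _ hbK, hQlt _ (lt_of_le_of_lt hab hbK)]
        · rw [hQge ⟨b, hb⟩ (le_of_not_gt hbK)]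
          by_cases haK : a < K
          · rw [hQlt _ haK]; exact hqs_ge_c ⟨b, hb⟩ (le_of_not_gt hbK)
          · rw [hQge _ (le_of_not_gt haK)]
            exact_mod_cast hc (Fin.mk_le_mk.mpr hab)
      · simp only [hQE_def, dif_neg hb]
        exact hQE0 a
    set sE0 : Pos n b1 → ℕ → Option (Fin n) :=
      fun s m => if h : m < b1 then s ⟨m, h⟩ else none with hsE_def
    have hpure : ∀ s : Pos n b1, ValidPos s →
        (∑ i, Q i * ∑ j, (if s j = some i then lam j else 0))
          ≤ ∑ m ∈ Finset.range b1, lamE m * QE m := by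
      intro s hs
      have h1 : (∑ i, Q i * ∑ j, (if s j = some i then lam j else 0))
          = ∑ j : Fin b1, lam j * ((s j).elim 0 Q) := by
        calc (∑ i, Q i * ∑ j, (if s j = some i then lam j else 0))
            = ∑ i, ∑ j, Q i * (if s j = some i then lam j else 0) := by
              apply Finset.sum_congr rfl; intros; rw [Finset.mul_sum]
          _ = ∑ j, ∑ i, Q i * (if s j = some i then lam j else 0) := Finset.sum_comm
          _ = ∑ j : Fin b1, lam j * ((s j).elim 0 Q) := by
              apply Finset.sum_congr rfl
              intro j _
              cases h : s j with
              | none => simp [h]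
              | some i0 => simp [h, Finset.sum_ite_eq, mul_comm]
      have h2 : ∑ j : Fin b1, lam j * ((s j).elim 0 Q)
          = ∑ m ∈ Finset.range b1, lamE m * ((sE0 s m).elim 0 Q) := by
        rw [← Fin.sum_univ_eq_sum_range (fun m => lamE m * ((sE0 s m).elim 0 Q)) b1]
        apply Finset.sum_congr rfl
        intro j _
        simp only [hlamE_def, hsE_def, dif_pos j.isLt, Fin.eta]
      rw [h1, h2]
      apply auxB b1 lamE (fun m => (sE0 s m).elim 0 Q) QE hlamE_anti hlamE0
      intro m hm
      set D : Finset ℕ := (Finset.range m).filter (fun j => sE0 s j ≠ none) with hD_def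
      have hDsum : ∑ j ∈ Finset.range m, ((sE0 s j).elim 0 Q : ℝ) = ∑ j ∈ D, (sE0 s j).elim 0 Q := by
        rw [hD_def, ← Finset.sum_filter_add_sum_filter_not (Finset.range m) (fun j => sE0 s j ≠ none)]
        have hz : ∑ j ∈ (Finset.range m).filter (fun j => ¬ sE0 s j ≠ none),
            ((sE0 s j).elim 0 Q : ℝ) = 0 := by
          apply Finset.sum_eq_zero
          intro j hj
          have := (Finset.mem_filter.mp hj).2
          have hnone : sE0 s j = none := not_not.mp this
          rw [hnone]
          rfl
        rw [hz, add_zero]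
      set f : ℕ → Fin n := fun j => (sE0 s j).getD ⟨0, hn⟩ with hf_def
      have hfval : ∀ j ∈ D, sE0 s j = some (f j) := by
        intro j hj
        have hne := (Finset.mem_filter.mp hj).2
        cases h : sE0 s j with
        | none => exact absurd h hne
        | some x => simp only [hf_def, h, Option.getD_some]
      have hjlt : ∀ j ∈ D, j < b1 := by
        intro j hj
        by_contra h
        have := (Finset.mem_filter.mp hj).2
        simp only [hsE_def, dif_neg h] at this
        exact this rfl
      have hinj : ∀ j ∈ D, ∀ j' ∈ D, f j = f j' → j = j' := by
        intro j hj j' hj' heq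
        have h1 := hfval j hj
        have h2 := hfval j' hj'
        have hjb := hjlt j hj
        have hjb' := hjlt j' hj'
        simp only [hsE_def, dif_pos hjb] at h1
        simp only [hsE_def, dif_pos hjb'] at h2
        have := hs ⟨j, hjb⟩ ⟨j', hjb'⟩ (by rw [h1, h2, heq]) (by rw [h1]; simp)
        exact Fin.mk.inj_iff.mp this
      have hDQ : ∑ j ∈ D, ((sE0 s j).elim 0 Q : ℝ) = ∑ i ∈ D.image f, Q i := by
        rw [Finset.sum_image hinj]
        apply Finset.sum_congr rfl
        intro j hj
        rw [hfval j hj]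
        rfl
      set A : Finset ℕ := (D.image f).image (fun i : Fin n => (i:ℕ)) with hA_def
      have hval : ∑ i ∈ D.image f, Q i = ∑ a ∈ A, QE a := by
        rw [hA_def, Finset.sum_image (fun x _ y _ h => Fin.ext h)]
        apply Finset.sum_congr rfl
        intro i _
        simp only [hQE_def, dif_pos i.isLt, Fin.eta]
      have hcardA : A.card ≤ m := by
        calc A.card ≤ (D.image f).card := Finset.card_image_le
          _ ≤ D.card := Finset.card_image_le
          _ ≤ (Finset.range m).card := Finset.card_filter_le _ _
          _ = m := Finset.card_range m
      calc ∑ j ∈ Finset.range m, ((sE0 s j).elim 0 Q : ℝ)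
          = ∑ a ∈ A, QE a := by rw [hDsum, hDQ, hval]
        _ ≤ ∑ a ∈ Finset.range A.card, QE a := auxA QE hQE_anti hQE0 A
        _ ≤ ∑ a ∈ Finset.range m, QE a :=
            Finset.sum_le_sum_of_subset_of_nonneg
              (Finset.range_subset_range.mpr hcardA) (fun a _ _ => hQE0 a)
    have hswap : ∀ σ' : Pos n b1 → ℝ, ∑ i, Q i * detProb lam σ' i
        = ∑ s, σ' s * (∑ i, Q i * ∑ j, (if s j = some i then lam j else 0)) := by
      intro σ'
      unfold detProb
      calc ∑ i, Q i * ∑ s, σ' s * ∑ j, (if s j = some i then lam j else 0)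
          = ∑ i, ∑ s, Q i * (σ' s * ∑ j, (if s j = some i then lam j else 0)) := by
            apply Finset.sum_congr rfl; intros; rw [Finset.mul_sum]
        _ = ∑ s, ∑ i, Q i * (σ' s * ∑ j, (if s j = some i then lam j else 0)) :=
            Finset.sum_comm
        _ = ∑ s, σ' s * (∑ i, Q i * ∑ j, (if s j = some i then lam j else 0)) := by
            apply Finset.sum_congr rfl
            intro s _
            rw [Finset.mul_sum]
            apply Finset.sum_congr rfl
            intros; ring
    have hdefQ : ∑ i, Q i * detProb lam σ i ≤ ∑ m ∈ Finset.range b1, lamE m * QE m := by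
      rw [hswap σ]
      calc ∑ s, σ s * (∑ i, Q i * ∑ j, (if s j = some i then lam j else 0))
          ≤ ∑ s, σ s * (∑ m ∈ Finset.range b1, lamE m * QE m) := by
            apply Finset.sum_le_sum
            intro s _
            by_cases hz : σ s = 0
            · simp [hz]
            · exact mul_le_mul_of_nonneg_left (hpure s (hsv s hz)) (hs0 s)
        _ = ∑ m ∈ Finset.range b1, lamE m * QE m := by rw [← Finset.sum_mul, hs1, one_mul]
    -- equality for σs
    set dE : ℕ → ℝ := fun m => if h : m < n then detProb lam σs ⟨m, h⟩ else 0 with hdE_def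
    have hdEK : ∀ m, m < K → dE m = P := by
      intro m hm
      have h1 : m < n := lt_of_lt_of_le hm hKn
      simp only [hdE_def, dif_pos h1]
      exact hdet1 ⟨m, h1⟩ hm
    have hdE2 : ∀ m, K ≤ m → dE m = lamE m := by
      intro m hm
      by_cases hb : m < b1
      · have h1 : m < n := lt_of_lt_of_le hb hb1n
        simp only [hdE_def, dif_pos h1, hlamE_def, dif_pos hb]
        exact hdet2 ⟨m, h1⟩ hb hm
      · simp only [hlamE_def, dif_neg hb]
        by_cases h1 : m < n
        · simp only [hdE_def, dif_pos h1]
          exact hdet3 ⟨m, h1⟩ (max_le (le_of_not_gt hb) hm)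
        · simp only [hdE_def, dif_neg h1]
    have hrangeK : ∑ m ∈ Finset.range K, lamE m
        = ∑ j ∈ Finset.univ.filter (fun j : Fin b1 => (j : ℕ) < K), lam j := by
      have e1 : ∑ j ∈ Finset.univ.filter (fun j : Fin b1 => (j : ℕ) < K), lam j
          = ∑ j : Fin b1, (if (j:ℕ) < K then lam j else 0) := Finset.sum_filter _ _
      have e2 : ∑ j : Fin b1, (if (j:ℕ) < K then lam j else 0)
          = ∑ m ∈ Finset.range b1, (if m < K then lamE m else 0) := by
        rw [← Fin.sum_univ_eq_sum_range (fun m => if m < K then lamE m else 0) b1]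
        apply Finset.sum_congr rfl
        intro j _
        by_cases h : (j:ℕ) < K
        · rw [if_pos h, if_pos h]
          simp only [hlamE_def, dif_pos j.isLt, Fin.eta]
        · rw [if_neg h, if_neg h]
      have e3 : ∑ m ∈ Finset.range b1, (if m < K then lamE m else 0)
          = ∑ m ∈ (Finset.range b1).filter (fun m => m < K), lamE m :=
        (Finset.sum_filter _ _).symm
      have e4 : (Finset.range b1).filter (fun m => m < K) = Finset.range (min b1 K) := by
        ext x
        simp only [Finset.mem_filter, Finset.mem_range, Finset.mem_range]
        omega
      have e5 : ∑ m ∈ Finset.range (min b1 K), lamE m = ∑ m ∈ Finset.range K, lamE m := by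
        apply Finset.sum_subset (Finset.range_subset_range.mpr (min_le_right _ _))
        intro m _ hm
        rw [Finset.mem_range] at *
        have hmb : ¬ m < b1 := by omega
        simp only [hlamE_def, dif_neg hmb]
      rw [e1, e2, e3, e4, e5]
    have hQEK : ∀ m, m < K → QE m = qs := by
      intro m hm
      have h1 : m < n := lt_of_lt_of_le hm hKn
      simp only [hQE_def, dif_pos h1]
      exact hQlt ⟨m, h1⟩ hm
    have hMσs : ∑ i, Q i * detProb lam σs i = ∑ m ∈ Finset.range b1, lamE m * QE m := by
      have hL : ∑ i, Q i * detProb lam σs i = ∑ m ∈ Finset.range n, QE m * dE m := by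
        rw [← Fin.sum_univ_eq_sum_range (fun m => QE m * dE m) n]
        apply Finset.sum_congr rfl
        intro i _
        simp only [hQE_def, hdE_def, dif_pos i.isLt, Fin.eta]
      have hsplitL : ∑ m ∈ Finset.range n, QE m * dE m
          = ∑ m ∈ Finset.range K, QE m * dE m + ∑ m ∈ Finset.Ico K n, QE m * dE m := by
        rw [Finset.range_eq_Ico, ← Finset.sum_Ico_consecutive _ (Nat.zero_le K) hKn,
          ← Finset.range_eq_Ico]
      have hRext : ∑ m ∈ Finset.range b1, lamE m * QE m
          = ∑ m ∈ Finset.range n, lamE m * QE m := by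
        apply Finset.sum_subset (Finset.range_subset_range.mpr hb1n)
        intro m _ hm
        rw [Finset.mem_range] at hm
        simp only [hlamE_def, dif_neg hm, zero_mul]
      have hsplitR : ∑ m ∈ Finset.range n, lamE m * QE m
          = ∑ m ∈ Finset.range K, lamE m * QE m + ∑ m ∈ Finset.Ico K n, lamE m * QE m := by
        rw [Finset.range_eq_Ico, ← Finset.sum_Ico_consecutive _ (Nat.zero_le K) hKn,
          ← Finset.range_eq_Ico]
      have eL1 : ∑ m ∈ Finset.range K, QE m * dE m = (K:ℝ) * (qs * P) := by
        rw [Finset.sum_congr rfl (fun m hm => by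
          rw [hQEK m (Finset.mem_range.mp hm), hdEK m (Finset.mem_range.mp hm)])]
        rw [Finset.sum_const, Finset.card_range, nsmul_eq_mul]
      have eL2 : ∑ m ∈ Finset.Ico K n, QE m * dE m = ∑ m ∈ Finset.Ico K n, lamE m * QE m := by
        apply Finset.sum_congr rfl
        intro m hm
        rw [hdE2 m (Finset.mem_Ico.mp hm).1]
        ring
      have eR1 : ∑ m ∈ Finset.range K, lamE m * QE m = (∑ m ∈ Finset.range K, lamE m) * qs := by
        rw [Finset.sum_mul]
        apply Finset.sum_congr rfl
        intro m hm
        rw [hQEK m (Finset.mem_range.mp hm)]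
      have ePK : (K:ℝ) * (qs * P) = (∑ m ∈ Finset.range K, lamE m) * qs := by
        rw [hrangeK, hPdef]
        field_simp
      rw [hL, hsplitL, hRext, hsplitR, eL1, eL2, eR1, ePK]
    have hUform : ∀ σ' : Pos n b1 → ℝ, U c lam σ' τs
        = (b2:ℝ) - ∑ i, Q i * detProb lam σ' i := by
      intro σ'
      unfold U
      rw [Finset.sum_congr rfl (fun i (_ : i ∈ Finset.univ) => by
        rw [hQatk i] : ∀ i ∈ Finset.univ,
          atkProb τs i * (1 - detProb lam σ' i) = Q i * (1 - detProb lam σ' i))]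
      have : ∀ i ∈ Finset.univ, Q i * (1 - detProb lam σ' i)
          = Q i - Q i * detProb lam σ' i := by intro i _; ring
      rw [Finset.sum_congr rfl this, Finset.sum_sub_distrib, hQsum]
    rw [hUform σ, hUform σs, hMσs]
    linarith [hdefQ]
end

section
/- The cyclic sensor positioning construction achieves the equilibrium detection probabilities: if b1 ≤ k* and for l ∈ [k*] the positioning s^l assigns sensor j (for j ∈ [b1]) to node v_{((l+j-2) mod k*)+1}, then the mixed strategy placing probability 1/k* on each s^l gives every node v_i with i ≤ k* detection probability p(v_i) = (1/k*)·Σ_{j=1}^{b1} λ_j, and p(v_i) = 0 for i > k*. -/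
open Finset

/-- The cyclic sensor positioning construction (case `b1 ≤ k*`) achieves
the equilibrium detection probabilities: the uniform mixture over the cyclic positionings
gives every node of index `< k` detection probability `(Σ_j λ_j)/k` and `0` otherwise. -/
theorem cyclic_positioning_det_prob (n b1 k : ℕ) (hk1 : 1 ≤ k) (hbk : b1 ≤ k) (hkn : k ≤ n)
    (lam : Fin b1 → ℝ) (hlam : Antitone lam) (hlam01 : ∀ j, 0 < lam j ∧ lam j ≤ 1)
    (sl : Fin k → Pos n b1)
    (hsl : ∀ (l : Fin k) (j : Fin b1), sl l j =
      some ⟨((l : ℕ) + (j : ℕ)) % k, lt_of_lt_of_le (Nat.mod_lt _ hk1) hkn⟩)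
    (σ : Pos n b1 → ℝ)
    (hσ : ∀ s, σ s = ∑ l : Fin k, if s = sl l then (1 : ℝ) / k else 0) :
    (∀ i : Fin n, (i : ℕ) < k → detProb lam σ i = (∑ j, lam j) / k) ∧
    (∀ i : Fin n, k ≤ (i : ℕ) → detProb lam σ i = 0) := by
  haveI : NeZero k := ⟨by omega⟩
  have hdet : ∀ i : Fin n, detProb lam σ i =
      ∑ l : Fin k, ∑ j : Fin b1,
        if ((l : ℕ) + (j : ℕ)) % k = (i : ℕ) then (1 / k : ℝ) * lam j else 0 := by
    intro i
    unfold detProb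
    simp only [hσ, Finset.sum_mul, ite_mul, zero_mul]
    rw [Finset.sum_comm]
    refine Finset.sum_congr rfl fun l _ => ?_
    rw [Finset.sum_ite_eq' _ (sl l)]
    simp only [Finset.mem_univ, if_true, Finset.mul_sum, mul_ite, mul_zero]
    refine Finset.sum_congr rfl fun j _ => ?_
    rw [hsl]
    congr 1
    simp [Option.some_inj, Fin.ext_iff]
  constructor
  · intro i hik
    rw [hdet, Finset.sum_comm]
    have key : ∀ j : Fin b1,
        (∑ l : Fin k, if ((l : ℕ) + (j : ℕ)) % k = (i : ℕ) then (1 / k : ℝ) * lam j else 0)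
        = (1 / k : ℝ) * lam j := by
      intro j
      set c : Fin k := ⟨(j : ℕ) % k, Nat.mod_lt _ (by omega)⟩ with hc
      set i' : Fin k := ⟨(i : ℕ), hik⟩ with hi'
      have hcond : ∀ l : Fin k, (((l : ℕ) + (j : ℕ)) % k = (i : ℕ)) ↔ (l + c = i') := by
        intro l
        rw [Fin.ext_iff]
        simp only [Fin.val_add, hc, hi', Nat.add_mod_right]
        constructor
        · intro h; rw [← h]; simp [Nat.add_mod]
        · intro h; rw [← h]; simp [Nat.add_mod]
      simp only [hcond]
      have := Equiv.sum_comp (Equiv.addRight c)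
        (fun l' : Fin k => if l' = i' then (1 / k : ℝ) * lam j else 0)
      simp only [Equiv.coe_addRight] at this
      trans ∑ l' : Fin k, if l' = i' then (1 / k : ℝ) * lam j else 0
      · convert this using 5
        exact if_congr Iff.rfl rfl rfl
      rw [Finset.sum_ite_eq' _ i']
      simp
    rw [Finset.sum_congr rfl fun j _ => key j]
    rw [← Finset.mul_sum, one_div_mul_eq_div]
  · intro i hik
    rw [hdet]
    refine Finset.sum_eq_zero fun l _ => Finset.sum_eq_zero fun j _ => ?_
    have : ((l : ℕ) + (j : ℕ)) % k < k := Nat.mod_lt _ (by omega)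
    rw [if_neg (by omega)]
end

section
/- The cyclic construction for b1 > k* achieves the equilibrium detection probabilities: if for l ∈ [k*] the positioning s^l assigns sensor j to node v_{((l+j-2) mod k*)+1} for j ∈ [k*] and sensor j to node v_j for k* < j ≤ b1, then the uniform mixture over { s^1, ..., s^{k*} } gives p(v_i) = (1/k*)·Σ_{j=1}^{k*} λ_j for i ≤ k*, p(v_i) = λ_i for k* < i ≤ b1, and p(v_i) = 0 for i > b1. -/
open Finset

/-- The cyclic construction for `b1 > k*`: the first `k` sensors are
cycled over the first `k` nodes and the remaining sensors are positioned
deterministically; the uniform mixture gives detection probability `(Σ_{j<k} λ_j)/k` to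
nodes of index `< k`, `λ_i` to nodes `k ≤ i < b1`, and `0` to nodes `i ≥ b1`. -/
theorem cyclic_positioning_det_prob_many_sensors (n b1 k : ℕ) (hk1 : 1 ≤ k) (hkb : k < b1)
    (hbn : b1 ≤ n)
    (lam : Fin b1 → ℝ) (hlam : Antitone lam) (hlam01 : ∀ j, 0 < lam j ∧ lam j ≤ 1)
    (sl : Fin k → Pos n b1)
    (hsl : ∀ (l : Fin k) (j : Fin b1), sl l j =
      if _h : (j : ℕ) < k then
        some ⟨((l : ℕ) + (j : ℕ)) % k,
          lt_of_lt_of_le (Nat.mod_lt _ hk1) (le_trans (le_of_lt hkb) hbn)⟩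
      else some ⟨(j : ℕ), lt_of_lt_of_le j.isLt hbn⟩)
    (σ : Pos n b1 → ℝ)
    (hσ : ∀ s, σ s = ∑ l : Fin k, if s = sl l then (1 : ℝ) / k else 0) :
    (∀ i : Fin n, (i : ℕ) < k →
      detProb lam σ i =
        (∑ j ∈ Finset.univ.filter (fun j : Fin b1 => (j : ℕ) < k), lam j) / k) ∧
    (∀ i : Fin n, ∀ h : (i : ℕ) < b1, k ≤ (i : ℕ) → detProb lam σ i = lam ⟨(i : ℕ), h⟩) ∧
    (∀ i : Fin n, b1 ≤ (i : ℕ) → detProb lam σ i = 0) := by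
  have hk0 : (k:ℝ) ≠ 0 := by positivity
  have key : ∀ i : Fin n, detProb lam σ i
      = (1/k) * ∑ l : Fin k, ∑ j, if sl l j = some i then lam j else 0 := by
    intro i
    unfold detProb
    simp only [hσ, Finset.sum_mul, ite_mul, zero_mul]
    rw [Finset.sum_comm]
    rw [Finset.mul_sum]
    refine Finset.sum_congr rfl fun l _ => ?_
    rw [Finset.sum_ite_eq' Finset.univ (sl l)
      (fun s => (1/(k:ℝ)) * ∑ j, if s j = some i then lam j else 0)]
    simp
  refine ⟨?_, ?_, ?_⟩
  · intro i hi
    rw [key i, Finset.sum_comm]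
    have main : ∀ j : Fin b1, (∑ l : Fin k, if sl l j = some i then lam j else 0)
        = if (j:ℕ) < k then lam j else 0 := by
      intro j
      by_cases hj : (j:ℕ) < k
      · simp only [hj, if_true]
        have hjm : (j:ℕ) % k = (j:ℕ) := Nat.mod_eq_of_lt hj
        rw [Finset.sum_eq_single (⟨((i:ℕ) + (k - (j:ℕ))) % k, Nat.mod_lt _ hk1⟩ : Fin k)]
        · rw [hsl]
          simp only [hj, dif_pos]
          rw [if_pos]
          congr 1
          apply Fin.ext
          show (((i:ℕ) + (k - (j:ℕ))) % k + (j:ℕ)) % k = (i:ℕ)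
          rw [Nat.mod_add_mod]
          have h2 : (i:ℕ) + (k - (j:ℕ)) + (j:ℕ) = (i:ℕ) + k := by omega
          rw [h2, Nat.add_mod_right, Nat.mod_eq_of_lt hi]
        · intro l _ hl
          rw [hsl]
          simp only [hj, dif_pos]
          rw [if_neg]
          intro hc
          have hv : ((l:ℕ) + (j:ℕ)) % k = (i:ℕ) := congrArg Fin.val (Option.some.inj hc)
          apply hl
          apply Fin.ext
          show (l:ℕ) = ((i:ℕ) + (k - (j:ℕ))) % k
          have h1 : ((l:ℕ) + (j:ℕ) + (k - (j:ℕ))) % k = (l:ℕ) := by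
            have h2 : (l:ℕ) + (j:ℕ) + (k - (j:ℕ)) = (l:ℕ) + k := by omega
            rw [h2, Nat.add_mod_right, Nat.mod_eq_of_lt l.isLt]
          calc (l:ℕ) = ((l:ℕ) + (j:ℕ) + (k - (j:ℕ))) % k := h1.symm
            _ = (((l:ℕ) + (j:ℕ)) % k + (k - (j:ℕ))) % k := (Nat.mod_add_mod _ _ _).symm
            _ = ((i:ℕ) + (k - (j:ℕ))) % k := by rw [hv]
        · simp
      · simp only [hj, if_false]
        refine Finset.sum_eq_zero fun l _ => ?_
        rw [hsl]
        simp only [hj, dif_neg, not_false_iff]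
        rw [if_neg]
        intro h
        have : (j:ℕ) = (i:ℕ) := congrArg Fin.val (Option.some.inj h)
        omega
    rw [Finset.sum_congr rfl fun j _ => main j, Finset.sum_filter]
    ring
  · intro i h hk
    rw [key i]
    have : ∀ l : Fin k, (∑ j, if sl l j = some i then lam j else 0) = lam ⟨(i:ℕ), h⟩ := by
      intro l
      rw [Finset.sum_eq_single (⟨(i:ℕ), h⟩ : Fin b1)]
      · rw [hsl]
        have hjk : ¬ ((i:ℕ) < k) := by omega
        simp [hjk]
      · intro j _ hj
        rw [hsl, if_neg]
        intro hcontra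
        split at hcontra
        · have := congrArg Fin.val (Option.some.inj hcontra)
          simp at this
          have := Nat.mod_lt ((l:ℕ)+(j:ℕ)) hk1
          omega
        · have := congrArg Fin.val (Option.some.inj hcontra)
          simp at this
          exact hj (Fin.ext this)
      · simp
    rw [Finset.sum_congr rfl fun l _ => this l]
    simp
    field_simp
  · intro i hb
    rw [key i]
    have : ∀ l : Fin k, (∑ j, if sl l j = some i then lam j else 0) = 0 := by
      intro l
      refine Finset.sum_eq_zero fun j _ => ?_
      rw [hsl, if_neg]
      intro hcontra
      split at hcontra
      · have := congrArg Fin.val (Option.some.inj hcontra)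
        simp at this
        have := Nat.mod_lt ((l:ℕ)+(j:ℕ)) hk1
        omega
      · have := congrArg Fin.val (Option.some.inj hcontra)
        simp at this
        omega
    simp [this]
end

section
/- The cyclic attack construction achieves the equilibrium attack probabilities: with b2' := k*·⌊(b2 - Σ_{j=k*+1}^n c_j)/k*⌋ and r := b2 - b2' - Σ_{j=k*+1}^n c_j (so 0 ≤ r < k*), if for each l ∈ [k*] the attack plan T^l targets exactly b2'/k* + 1 components of E_{v_j} for j in a cyclic window of r indices starting at l (mod k*), exactly b2'/k* components of E_{v_j} for the other j ∈ [k*], and all c_j components of E_{v_j} for j > k*, then the uniform mixture over {T^1,...,T^{k*}} yields total attack probability Σ_{e∈E_{v_i}} p(e) = (1/k*)(b2 - Σ_{j=k*+1}^n c_j) for every i ≤ k* and = c_i for i > k*. -/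
open Finset

lemma count_window (k m i : ℕ) (hk : 0 < k) (hm : m ≤ k) (hi : i < k) :
    ((univ.filter (fun l : Fin k =>
        ∃ t ∈ Finset.range m, i = ((l : ℕ) + t) % k)).card) = m := by
  have hinj : Set.InjOn (fun t : ℕ => (⟨(i + k - t) % k, Nat.mod_lt _ hk⟩ : Fin k))
      (Finset.range m) := by
    intro t ht t' ht' h
    simp only [Fin.mk.injEq] at h
    simp only [Finset.coe_range, Set.mem_Iio] at ht ht'
    have h1 : i + k - t ≡ i + k - t' [MOD k] := h
    have h2 := h1.add_right (t + t')
    have e1 : i + k - t + (t + t') = i + k + t' := by omega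
    have e2 : i + k - t' + (t + t') = i + k + t := by omega
    rw [e1, e2] at h2
    have e3 : i + k + t' = (i + k) + t' := rfl
    have h3 : t' ≡ t [MOD k] := Nat.ModEq.add_left_cancel' (i + k) h2
    have h4 : t' % k = t % k := h3
    rw [Nat.mod_eq_of_lt (by omega), Nat.mod_eq_of_lt (by omega)] at h4
    omega
  have hset : (univ.filter (fun l : Fin k =>
        ∃ t ∈ Finset.range m, i = ((l : ℕ) + t) % k))
      = (Finset.range m).image (fun t => (⟨(i + k - t) % k, Nat.mod_lt _ hk⟩ : Fin k)) := by
    ext l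
    simp only [Finset.mem_filter, Finset.mem_univ, true_and, Finset.mem_image,
      Finset.mem_range]
    constructor
    · rintro ⟨t, ht, hlt⟩
      refine ⟨t, ht, ?_⟩
      -- show (i + k - t) % k = l
      have hlk : (l : ℕ) < k := l.isLt
      have h1 : ((l : ℕ) + t) % k = i % k := by rw [← hlt, Nat.mod_eq_of_lt hi]
      have h2 : (l : ℕ) + t ≡ i [MOD k] := h1
      have h3 := h2.add_right (k - t)
      have e1 : (l : ℕ) + t + (k - t) = (l : ℕ) + k := by omega
      have e2 : i + (k - t) = i + k - t := by omega
      rw [e1, e2] at h3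
      have : (i + k - t) % k = ((l : ℕ) + k) % k := h3.symm
      rw [Nat.add_mod_right, Nat.mod_eq_of_lt hlk] at this
      exact Fin.ext this
    · rintro ⟨t, ht, hlt⟩
      refine ⟨t, ht, ?_⟩
      have : (l : ℕ) = (i + k - t) % k := by rw [← hlt]
      rw [this, Nat.mod_add_mod]
      have e1 : i + k - t + t = i + k := by omega
      rw [e1, Nat.add_mod_right, Nat.mod_eq_of_lt hi]
  rw [hset, Finset.card_image_of_injOn hinj, Finset.card_range]

lemma kstar_mem (n b2 : ℕ) (hn : 1 ≤ n) (c : Fin n → ℕ) (hb2 : 1 ≤ b2) :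
    1 ≤ kstar n b2 c ∧ kstar n b2 c ≤ n := by
  have hns : n ∈ {k | 1 ≤ k ∧ k ≤ n ∧ (k : ℤ) * cext n c k ≤ (b2 : ℤ) - tailZ n c k} := by
    refine ⟨hn, le_refl n, ?_⟩
    have h1 : cext n c n = 0 := by simp [cext]
    have h2 : tailZ n c n = 0 := by
      unfold tailZ
      rw [Finset.sum_eq_zero]
      intro j hj
      simp only [Finset.mem_filter] at hj
      exact absurd hj.2 (by omega)
    rw [h1, h2]
    simp
  have := Nat.sInf_mem (⟨n, hns⟩ : Set.Nonempty _)
  exact ⟨this.1, this.2.1⟩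

/-- The cyclic attack construction achieves the equilibrium attack
probabilities: with `q = ⌊(b2 - Σ_{j>k*} c_j)/k*⌋` and remainder `r`, if each plan `T^l`
targets `q+1` components of `E_{v_j}` for `j` in the cyclic window of `r` indices starting
at `l`, `q` components for the other `j ≤ k*`, and all components for `j > k*`, then the
uniform mixture over the `T^l` yields total attack probability
`(1/k*)(b2 - Σ_{j>k*} c_j)` on each of the first `k*` sets and `c_i` on the others. -/
theorem cyclic_attack_atk_prob (n b2 : ℕ) (hn : 1 ≤ n)
    (c : Fin n → ℕ) (hc : Antitone c)
    (hb2 : 1 ≤ b2) (hb2E : b2 ≤ ∑ i, c i)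
    (q r : ℤ)
    (hq : q = ((b2 : ℤ) - tailZ n c (kstar n b2 c)) / (kstar n b2 c))
    (hr : r = ((b2 : ℤ) - tailZ n c (kstar n b2 c)) - (kstar n b2 c) * q)
    (Tl : Fin (kstar n b2 c) → Finset (Component n c))
    (hT : ∀ l, ∀ j : Fin n,
      (((Tl l).filter (fun e => e.1 = j)).card : ℤ) =
        if (j : ℕ) < kstar n b2 c then
          (if ∃ t ∈ Finset.range r.toNat, (j : ℕ) = ((l : ℕ) + t) % kstar n b2 c then
            q + 1 else q)
        else (c j : ℤ))
    (τ : Finset (Component n c) → ℝ)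
    (hτ : ∀ T, τ T = ∑ l : Fin (kstar n b2 c),
      if T = Tl l then (1 : ℝ) / (kstar n b2 c) else 0) :
    (∀ i : Fin n, (i : ℕ) < kstar n b2 c →
      atkProb τ i = ((b2 : ℝ) - (tailZ n c (kstar n b2 c) : ℝ)) / (kstar n b2 c)) ∧
    (∀ i : Fin n, kstar n b2 c ≤ (i : ℕ) → atkProb τ i = (c i : ℝ)) := by 
  obtain ⟨hk1, hkn⟩ := kstar_mem n b2 hn c hb2
  have hk0 : 0 < (kstar n b2 c) := hk1
  have hkR : ((kstar n b2 c) : ℝ) ≠ 0 := by positivity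
  have hatk : ∀ i : Fin n, atkProb τ i =
      ∑ l : Fin (kstar n b2 c), (1 / ((kstar n b2 c) : ℝ)) * (((Tl l).filter (fun e => e.1 = i)).card : ℝ) := by
    intro i
    unfold atkProb
    simp_rw [hτ, Finset.sum_mul, ite_mul, zero_mul]
    rw [Finset.sum_comm]
    refine Finset.sum_congr rfl fun l _ => ?_
    rw [Finset.sum_ite_eq' Finset.univ (Tl l)
      (fun T => 1 / ((kstar n b2 c) : ℝ) * ((T.filter (fun e => e.1 = i)).card : ℝ))]
    simp
  have hrmod : r = ((b2 : ℤ) - tailZ n c (kstar n b2 c)) % ((kstar n b2 c) : ℤ) := by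
    rw [hr, hq, Int.emod_def]
  have hr0 : 0 ≤ r := by
    rw [hrmod]; exact Int.emod_nonneg _ (by exact_mod_cast hk0.ne')
  have hrk : r < ((kstar n b2 c) : ℤ) := by
    rw [hrmod]; exact Int.emod_lt_of_pos _ (by exact_mod_cast hk0)
  have hrtk : r.toNat ≤ (kstar n b2 c) := by omega
  constructor
  · intro i hi
    rw [hatk, ← Finset.mul_sum]
    have hsumZ : ∑ l : Fin (kstar n b2 c), (((Tl l).filter (fun e => e.1 = i)).card : ℤ)
        = (b2 : ℤ) - tailZ n c (kstar n b2 c) := by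
      have step : ∀ l : Fin (kstar n b2 c), (((Tl l).filter (fun e => e.1 = i)).card : ℤ)
          = if ∃ t ∈ Finset.range r.toNat, (i : ℕ) = ((l : ℕ) + t) % (kstar n b2 c) then q + 1 else q := by
        intro l
        rw [hT l i, if_pos hi]
      rw [Finset.sum_congr rfl fun l _ => step l, Finset.sum_ite, Finset.sum_const,
        Finset.sum_const, count_window (kstar n b2 c) r.toNat (i : ℕ) hk0 hrtk hi]
      have hcnot : (Finset.univ.filter (fun l : Fin (kstar n b2 c) =>
          ¬ ∃ t ∈ Finset.range r.toNat, (i : ℕ) = ((l : ℕ) + t) % (kstar n b2 c))).card = (kstar n b2 c) - r.toNat := by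
        rw [Finset.filter_not, Finset.card_sdiff_of_subset (Finset.filter_subset _ _),
          count_window (kstar n b2 c) r.toNat (i : ℕ) hk0 hrtk hi]
        simp
      rw [hcnot]
      simp only [nsmul_eq_mul]
      push_cast [hrtk]
      rw [Int.toNat_of_nonneg hr0]
      linear_combination hr
    have hsumR : ∑ l : Fin (kstar n b2 c), (((Tl l).filter (fun e => e.1 = i)).card : ℝ)
        = (b2 : ℝ) - (tailZ n c (kstar n b2 c) : ℝ) := by
      have := congrArg (fun z : ℤ => (z : ℝ)) hsumZ
      push_cast at this
      exact this
    rw [hsumR]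
    field_simp
  · intro i hi
    rw [hatk]
    have step : ∀ l : Fin (kstar n b2 c), (((Tl l).filter (fun e => e.1 = i)).card : ℝ) = (c i : ℝ) := by
      intro l
      have h := hT l i
      rw [if_neg (by omega)] at h
      exact_mod_cast h
    rw [Finset.sum_congr rfl (fun l _ => by rw [step l]), Finset.sum_const, Finset.card_univ,
      Fintype.card_fin]
    rw [nsmul_eq_mul]
    field_simp
end

section
/- In the disjoint-monitoring-sets inspection game, if the attacker plays any mixed attack strategy σ2 satisfying Σ_{e∈E_{v_i}} p_{σ2}(e) = (1/k*)(b2 - Σ_{j=k*+1}^n c_j) for i ≤ k* and = c_i for i > k*, then for any mixed inspection strategy σ1 the expected number of undetected attacks satisfies U(σ1, σ2) ≥ b2 - Σ_{i=1}^{b1} λ_i · min( c_i , (1/k*)(b2 - Σ_{j=k*+1}^n c_j) ). -/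
open Finset

lemma fin_strictMono_le {k n : ℕ} (f : Fin k → Fin n) (hf : StrictMono f) :
    ∀ t (h : t < k), t ≤ (f ⟨t, h⟩ : ℕ) := by
  intro t
  induction t with
  | zero => intro h; omega
  | succ t ih =>
    intro h
    have h' : t < k := by omega
    have h2 := hf (show (⟨t, h'⟩ : Fin k) < ⟨t+1, h⟩ by simp [Fin.lt_def])
    have h3 := ih h'
    simp only [Fin.lt_def] at h2
    omega

lemma sum_le_top {n : ℕ} (m : Fin n → ℝ) (hm : Antitone m) (hm0 : ∀ i, 0 ≤ m i)
    (S : Finset (Fin n)) (r : ℕ) (hSr : S.card ≤ r) :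
    ∑ i ∈ S, m i ≤ ∑ j ∈ Finset.range r, (if h : j < n then m ⟨j, h⟩ else 0) := by
  classical
  set k := S.card with hk
  have hemb : S = Finset.univ.map (S.orderEmbOfFin hk.symm).toEmbedding := by
    ext i
    simp only [Finset.mem_map, Finset.mem_univ, true_and]
    constructor
    · intro hi
      have : i ∈ Set.range (S.orderEmbOfFin hk.symm) := by
        rw [Finset.range_orderEmbOfFin]; exact hi
      obtain ⟨j, hj⟩ := this; exact ⟨j, hj⟩
    · rintro ⟨j, rfl⟩; exact Finset.orderEmbOfFin_mem S hk.symm j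
  conv_lhs => rw [hemb, Finset.sum_map]
  have h2 : ∀ j : Fin k, m (S.orderEmbOfFin hk.symm j) ≤
      (if h : (j : ℕ) < n then m ⟨(j : ℕ), h⟩ else 0) := by
    intro j
    have hlt : (j : ℕ) < n := lt_of_le_of_lt
      (fin_strictMono_le _ (S.orderEmbOfFin hk.symm).strictMono j j.2)
      (S.orderEmbOfFin hk.symm j).2
    rw [dif_pos hlt]
    exact hm (by
      show (⟨(j:ℕ), hlt⟩ : Fin n) ≤ _
      rw [Fin.le_def]
      exact fin_strictMono_le _ (S.orderEmbOfFin hk.symm).strictMono j j.2)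
  show ∑ j : Fin k, m (S.orderEmbOfFin hk.symm j) ≤ _
  calc ∑ j : Fin k, m (S.orderEmbOfFin hk.symm j)
      ≤ ∑ j : Fin k, (if h : (j : ℕ) < n then m ⟨(j : ℕ), h⟩ else 0) :=
        Finset.sum_le_sum fun j _ => h2 j
    _ = ∑ j ∈ Finset.range k, (if h : j < n then m ⟨j, h⟩ else 0) :=
        (Fin.sum_univ_eq_sum_range (fun j => if h : j < n then m ⟨j, h⟩ else 0) k)
    _ ≤ ∑ j ∈ Finset.range r, (if h : j < n then m ⟨j, h⟩ else 0) := by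
        apply Finset.sum_le_sum_of_subset_of_nonneg (Finset.range_subset_range.2 hSr)
        intro j _ _
        split
        · exact hm0 _
        · exact le_refl 0

lemma abel_identity (L x : ℕ → ℝ) (N : ℕ) :
    ∑ t ∈ Finset.range N, (L t - L (t+1)) * (∑ j ∈ Finset.range (t+1), x j)
      = ∑ j ∈ Finset.range N, L j * x j - L N * ∑ j ∈ Finset.range N, x j := by
  induction N with
  | zero => simp
  | succ N ih =>
    rw [Finset.sum_range_succ, ih, Finset.sum_range_succ (fun j => L j * x j),
      Finset.sum_range_succ x]
    ring

lemma abel_le (N : ℕ) (L x y : ℕ → ℝ)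
    (hmono : ∀ t, t + 1 ≤ N → L (t+1) ≤ L t) (hLN : L N = 0)
    (hxy : ∀ t, t ≤ N → ∑ j ∈ Finset.range t, x j ≤ ∑ j ∈ Finset.range t, y j) :
    ∑ j ∈ Finset.range N, L j * x j ≤ ∑ j ∈ Finset.range N, L j * y j := by
  have hx := abel_identity L x N
  have hy := abel_identity L y N
  rw [hLN] at hx hy
  simp only [zero_mul, sub_zero] at hx hy
  rw [← hx, ← hy]
  apply Finset.sum_le_sum
  intro t ht
  rw [Finset.mem_range] at ht
  have hD : 0 ≤ L t - L (t+1) := by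
    have : L (t+1) ≤ L t := hmono t (by omega)
    linarith
  exact mul_le_mul_of_nonneg_left (hxy (t+1) (by omega)) hD

lemma per_positioning {n b1 : ℕ} (hn : 0 < n) (m : Fin n → ℝ)
    (hm : Antitone m) (hm0 : ∀ i, 0 ≤ m i)
    (lam : Fin b1 → ℝ) (hlam : Antitone lam) (hlam0 : ∀ j, 0 ≤ lam j)
    (s : Pos n b1) (hs : ValidPos s) :
    ∑ j : Fin b1, lam j * (s j).elim 0 m ≤
      ∑ j : Fin b1, lam j * (if h : (j : ℕ) < n then m ⟨(j : ℕ), h⟩ else 0) := by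
  classical
  set L : ℕ → ℝ := fun t => if h : t < b1 then lam ⟨t, h⟩ else 0 with hL
  set x : ℕ → ℝ := fun t => if h : t < b1 then (s ⟨t, h⟩).elim 0 m else 0 with hx
  set y : ℕ → ℝ := fun t => if h : t < n then m ⟨t, h⟩ else 0 with hy
  have e1 : ∑ j : Fin b1, lam j * (s j).elim 0 m = ∑ j ∈ Finset.range b1, L j * x j := by
    rw [← Fin.sum_univ_eq_sum_range (fun t => L t * x t) b1]
    apply Finset.sum_congr rfl
    intro j _
    simp only [hL, hx, dif_pos j.2, Fin.eta]
  have e2 : ∑ j : Fin b1, lam j * (if h : (j : ℕ) < n then m ⟨(j : ℕ), h⟩ else 0)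
      = ∑ j ∈ Finset.range b1, L j * y j := by
    rw [← Fin.sum_univ_eq_sum_range (fun t => L t * y t) b1]
    apply Finset.sum_congr rfl
    intro j _
    simp only [hL, hy, dif_pos j.2, Fin.eta]
  rw [e1, e2]
  apply abel_le
  · intro t ht
    by_cases h1 : t + 1 < b1
    · have h0 : t < b1 := by omega
      simp only [hL, dif_pos h1, dif_pos h0]
      exact hlam (by simp [Fin.le_def])
    · have h0 : t < b1 := by omega
      simp only [hL, dif_neg h1, dif_pos h0]
      exact hlam0 _
  · simp [hL]
  · intro t ht
    set f : ℕ → Fin n := fun j => if h : j < b1 then (s ⟨j, h⟩).getD ⟨0, hn⟩ else ⟨0, hn⟩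
      with hf
    set A : Finset ℕ := (Finset.range t).filter
      (fun j => ∃ h : j < b1, (s ⟨j, h⟩).isSome) with hA
    have step1 : ∑ j ∈ Finset.range t, x j = ∑ j ∈ A, x j := by
      rw [hA]
      refine (Finset.sum_filter_of_ne ?_).symm
      intro j hj hxj
      have hjb : j < b1 := by
        by_contra hc
        simp only [hx, dif_neg hc] at hxj
        exact hxj rfl
      refine ⟨hjb, ?_⟩
      simp only [hx, dif_pos hjb] at hxj
      cases hsj : s ⟨j, hjb⟩ with
      | none => rw [hsj] at hxj; simp at hxj
      | some i => simp
    have step2 : ∀ j ∈ A, x j = m (f j) := by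
      intro j hj
      rw [hA, Finset.mem_filter] at hj
      obtain ⟨-, hjb, hsome⟩ := hj
      simp only [hx, hf, dif_pos hjb]
      cases hsj : s ⟨j, hjb⟩ with
      | none => rw [hsj] at hsome; simp at hsome
      | some i => simp
    have inj : Set.InjOn f ↑A := by
      intro j hj j' hj' hff
      rw [hA, Finset.coe_filter] at hj hj'
      obtain ⟨-, hjb, hsome⟩ := hj
      obtain ⟨-, hjb', hsome'⟩ := hj'
      obtain ⟨i, hi⟩ := Option.isSome_iff_exists.mp hsome
      obtain ⟨i', hi'⟩ := Option.isSome_iff_exists.mp hsome'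
      simp only [hf, dif_pos hjb, dif_pos hjb', hi, hi', Option.getD_some] at hff
      have := hs ⟨j, hjb⟩ ⟨j', hjb'⟩ (by rw [hi, hi', hff]) (by rw [hi]; simp)
      simpa [Fin.ext_iff] using this
    have step3 : ∑ j ∈ A, m (f j) = ∑ i ∈ A.image f, m i := (Finset.sum_image inj).symm
    have hcard : (A.image f).card ≤ t := by
      calc (A.image f).card ≤ A.card := Finset.card_image_le
        _ ≤ (Finset.range t).card := Finset.card_filter_le _ _
        _ = t := Finset.card_range t
    calc ∑ j ∈ Finset.range t, x j = ∑ j ∈ A, x j := step1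
      _ = ∑ j ∈ A, m (f j) := Finset.sum_congr rfl step2
      _ = ∑ i ∈ A.image f, m i := step3
      _ ≤ ∑ j ∈ Finset.range t, y j := sum_le_top m hm hm0 _ t hcard


/-- If the attacker plays any mixed attack strategy satisfying the
equilibrium attack-probability conditions, then against every mixed inspection strategy
the expected number of undetected attacks is at least the value formula. -/
theorem attack_strategy_guarantee (n b1 b2 : ℕ) (hn : 1 ≤ n) (hb1n : b1 ≤ n)
    (c : Fin n → ℕ) (hc : Antitone c) (hcpos : ∀ i, 1 ≤ c i)
    (lam : Fin b1 → ℝ) (hlam : Antitone lam) (hlam01 : ∀ j, 0 < lam j ∧ lam j ≤ 1)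
    (hb2 : 1 ≤ b2) (hb2E : b2 ≤ ∑ i, c i)
    (τs : Finset (Component n c) → ℝ) (hτs : MixedAtk n b2 c τs)
    (hatk1 : ∀ i : Fin n, (i : ℕ) < kstar n b2 c →
      atkProb τs i = ((b2 : ℝ) - (tailZ n c (kstar n b2 c) : ℝ)) / (kstar n b2 c))
    (hatk2 : ∀ i : Fin n, kstar n b2 c ≤ (i : ℕ) → atkProb τs i = (c i : ℝ)) :
    ∀ σ, MixedInsp n b1 σ → valueFormula n b1 b2 c lam ≤ U c lam σ τs := by
  classical
  intro σ hσ
  obtain ⟨hσ0, hσ1, hσvalid⟩ := hσ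
  set k := kstar n b2 c with hkdef
  -- the defining set is nonempty
  have hne : n ∈ {k | 1 ≤ k ∧ k ≤ n ∧ (k : ℤ) * cext n c k ≤ (b2 : ℤ) - tailZ n c k} := by
    refine ⟨hn, le_refl n, ?_⟩
    have h1 : cext n c n = 0 := dif_neg (lt_irrefl n)
    have h2 : tailZ n c n = 0 := by
      have hempty : (Finset.univ.filter fun j : Fin n => n ≤ (j : ℕ)) = ∅ := by
        ext j
        simp only [Finset.mem_filter, Finset.mem_univ, true_and, Finset.notMem_empty,
          iff_false]
        have := j.2; omega
      rw [tailZ, hempty, Finset.sum_empty]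
    rw [h1, h2]
    simp
  have hkmem : 1 ≤ k ∧ k ≤ n ∧ (k : ℤ) * cext n c k ≤ (b2 : ℤ) - tailZ n c k := by
    have h := Nat.sInf_mem
      (s := {k | 1 ≤ k ∧ k ≤ n ∧ (k : ℤ) * cext n c k ≤ (b2 : ℤ) - tailZ n c k}) ⟨n, hne⟩
    rw [hkdef]; exact h
  obtain ⟨hk1, hkn, hkineq⟩ := hkmem
  have hkpos : (0 : ℝ) < (k : ℝ) := by exact_mod_cast hk1
  set q : ℝ := ((b2 : ℝ) - (tailZ n c k : ℝ)) / (k : ℝ) with hqdef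
  have hcext_nonneg : ∀ t, (0 : ℤ) ≤ cext n c t := by
    intro t; unfold cext; split
    · exact Int.natCast_nonneg _
    · exact le_refl 0
  have hq0 : 0 ≤ q := by
    apply div_nonneg _ hkpos.le
    have h0 : (0 : ℤ) ≤ (k : ℤ) * cext n c k :=
      mul_nonneg (Int.natCast_nonneg k) (hcext_nonneg k)
    have h1 : (0 : ℤ) ≤ (b2 : ℤ) - tailZ n c k := le_trans h0 hkineq
    have h2 : (0 : ℝ) ≤ ((b2 : ℤ) : ℝ) - ((tailZ n c k : ℤ) : ℝ) := by exact_mod_cast h1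
    push_cast at h2 ⊢
    linarith
  have hcextq : ((cext n c k : ℤ) : ℝ) ≤ q := by
    rw [hqdef, le_div_iff₀ hkpos]
    have h1 : (cext n c k) * (k : ℤ) ≤ (b2 : ℤ) - tailZ n c k := by
      rw [mul_comm]; exact hkineq
    have h2 : ((cext n c k : ℤ) : ℝ) * ((k : ℤ) : ℝ) ≤ ((b2:ℤ) : ℝ) - ((tailZ n c k : ℤ) : ℝ) := by
      exact_mod_cast h1
    push_cast at h2 ⊢
    linarith
  have tail_step : ∀ t (h : t < n), tailZ n c t = (c ⟨t, h⟩ : ℤ) + tailZ n c (t + 1) := by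
    intro t h
    have hins : (Finset.univ.filter fun j : Fin n => t ≤ (j : ℕ)) =
        insert ⟨t, h⟩ (Finset.univ.filter fun j : Fin n => t + 1 ≤ (j : ℕ)) := by
      ext j
      simp only [Finset.mem_filter, Finset.mem_univ, true_and, Finset.mem_insert, Fin.ext_iff]
      omega
    rw [tailZ, hins, Finset.sum_insert (by simp), tailZ]
  have hk1' : k - 1 < n := by omega
  have hq_le_cim : ∀ i : Fin n, (i : ℕ) < k → q ≤ (c i : ℝ) := by
    have hkey : (b2 : ℤ) - tailZ n c k ≤ (k : ℤ) * (c ⟨k - 1, hk1'⟩ : ℤ) := by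
      rcases Nat.lt_or_ge (k - 1) 1 with h0 | h1
      · -- k = 1
        have hkk : k = 1 := by omega
        have h0n : 0 < n := hn
        have hidx : (⟨k - 1, hk1'⟩ : Fin n) = ⟨0, h0n⟩ := by
          rw [Fin.mk_eq_mk]; omega
        have hsum : (b2 : ℤ) ≤ ∑ i : Fin n, (c i : ℤ) := by exact_mod_cast hb2E
        have ht0 : tailZ n c 0 = ∑ i : Fin n, (c i : ℤ) := by
          rw [tailZ]
          congr 1
          ext j; simp
        have hsplit : ∑ i : Fin n, (c i : ℤ) = (c ⟨0, h0n⟩ : ℤ) + tailZ n c 1 := by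
          rw [← ht0, tail_step 0 h0n]
        have hfin : (b2 : ℤ) ≤ (c ⟨0, h0n⟩ : ℤ) + tailZ n c 1 := by
          rw [← hsplit]; exact hsum
        rw [hidx, hkk]
        push_cast
        linarith
      · -- k - 1 ≥ 1, use minimality
        have hlt : k - 1 < sInf {k | 1 ≤ k ∧ k ≤ n ∧
            (k : ℤ) * cext n c k ≤ (b2 : ℤ) - tailZ n c k} := by
          have h2 : k - 1 < k := by omega
          rw [hkdef] at h2
          exact h2
        have hnotin := Nat.notMem_of_lt_sInf hlt
        simp only [Set.mem_setOf_eq, not_and, not_le] at hnotin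
        have hfail := hnotin h1 (by omega)
        have hcx : cext n c (k - 1) = (c ⟨k - 1, hk1'⟩ : ℤ) := dif_pos hk1'
        have hts := tail_step (k - 1) hk1'
        have hsucc : k - 1 + 1 = k := by omega
        rw [hsucc] at hts
        rw [hcx, hts] at hfail
        have hcast : ((k - 1 : ℕ) : ℤ) = (k : ℤ) - 1 := by
          push_cast [Nat.cast_sub hk1]; ring
        rw [hcast] at hfail
        nlinarith [hfail]
    intro i hi
    have h1 : q ≤ ((c ⟨k - 1, hk1'⟩ : ℕ) : ℝ) := by
      rw [hqdef, div_le_iff₀ hkpos]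
      have h2 : ((b2 : ℤ) : ℝ) - ((tailZ n c k : ℤ) : ℝ) ≤
          ((k : ℤ) : ℝ) * (((c ⟨k - 1, hk1'⟩ : ℕ) : ℤ) : ℝ) := by exact_mod_cast hkey
      push_cast at h2 ⊢
      linarith
    have h2 : ((c ⟨k - 1, hk1'⟩ : ℕ) : ℝ) ≤ (c i : ℝ) := by
      have : c ⟨k - 1, hk1'⟩ ≤ c i := hc (by rw [Fin.le_def]; simp; omega)
      exact_mod_cast this
    linarith
  have hc_le_q : ∀ i : Fin n, k ≤ (i : ℕ) → (c i : ℝ) ≤ q := by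
    intro i hi
    have hkn' : k < n := lt_of_le_of_lt hi i.2
    have h1 : (c i : ℤ) ≤ cext n c k := by
      rw [cext, dif_pos hkn']
      have : c i ≤ c ⟨k, hkn'⟩ := hc (by rw [Fin.le_def]; exact hi)
      exact_mod_cast this
    have h2 : (c i : ℝ) ≤ ((cext n c k : ℤ) : ℝ) := by exact_mod_cast h1
    linarith [hcextq]
  set m : Fin n → ℝ := fun i => min ((c i : ℕ) : ℝ) q with hmdef
  have hm_anti : Antitone m := by
    intro i j hij
    simp only [hmdef]
    exact min_le_min (by exact_mod_cast hc hij) le_rfl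
  have hm0 : ∀ i, 0 ≤ m i := fun i => le_min (Nat.cast_nonneg _) hq0
  have hatk_m : ∀ i, atkProb τs i = m i := by
    intro i
    rcases lt_or_ge (i : ℕ) k with h | h
    · rw [hatk1 i h]
      exact (min_eq_right (hq_le_cim i h)).symm
    · rw [hatk2 i h]
      exact (min_eq_left (hc_le_q i h)).symm
  have hcard : ((Finset.univ : Finset (Fin n)).filter fun i : Fin n => (i : ℕ) < k).card = k := by
    have himg : ((Finset.univ : Finset (Fin n)).filter fun i : Fin n => (i : ℕ) < k)
        = Finset.map (Fin.castLEEmb hkn) Finset.univ := by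
      ext i
      simp only [Finset.mem_filter, Finset.mem_univ, true_and, Finset.mem_map,
        RelEmbedding.coe_toEmbedding]
      constructor
      · intro hi
        exact ⟨⟨(i : ℕ), hi⟩, Fin.ext (by simp [Fin.castLEEmb])⟩
      · rintro ⟨j, rfl⟩
        simpa [Fin.castLEEmb] using j.2
    rw [himg, Finset.card_map, Finset.card_univ, Fintype.card_fin]
  have hsum_m : ∑ i, m i = (b2 : ℝ) := by
    rw [← Finset.sum_filter_add_sum_filter_not Finset.univ (fun i : Fin n => (i : ℕ) < k)]
    have hA : ∑ i ∈ Finset.univ.filter (fun i : Fin n => (i : ℕ) < k), m i = (k : ℝ) * q := by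
      rw [Finset.sum_congr rfl (fun i hi => ?_), Finset.sum_const, hcard, nsmul_eq_mul]
      rw [Finset.mem_filter] at hi
      exact min_eq_right (hq_le_cim i hi.2)
    have hB : ∑ i ∈ Finset.univ.filter (fun i : Fin n => ¬ (i : ℕ) < k), m i
        = ((tailZ n c k : ℤ) : ℝ) := by
      have hfil : (Finset.univ.filter fun i : Fin n => ¬ (i : ℕ) < k)
          = (Finset.univ.filter fun i : Fin n => k ≤ (i : ℕ)) := by
        apply Finset.filter_congr
        intro i _
        simp [not_lt]
      rw [hfil, tailZ]
      push_cast
      apply Finset.sum_congr rfl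
      intro i hi
      rw [Finset.mem_filter] at hi
      exact min_eq_left (hc_le_q i hi.2)
    rw [hA, hB, hqdef, mul_div_cancel₀ _ (ne_of_gt hkpos)]
    ring
  -- key rearrangements
  have key : ∀ (o : Option (Fin n)) (l : ℝ),
      (∑ i, m i * (if o = some i then l else 0)) = l * o.elim 0 m := by
    intro o l
    cases o with
    | none => simp
    | some i0 =>
      simp only [Option.some.injEq, mul_ite, mul_zero]
      rw [Finset.sum_ite_eq Finset.univ i0 (fun i => m i * l)]
      simp [mul_comm]
  have inner_eq : ∀ s : Pos n b1,
      ∑ i, m i * ∑ j, (if s j = some i then lam j else 0)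
        = ∑ j : Fin b1, lam j * (s j).elim 0 m := by
    intro s
    calc ∑ i, m i * ∑ j, (if s j = some i then lam j else 0)
        = ∑ i, ∑ j, m i * (if s j = some i then lam j else 0) :=
          Finset.sum_congr rfl fun i _ => Finset.mul_sum _ _ _
      _ = ∑ j, ∑ i, m i * (if s j = some i then lam j else 0) := Finset.sum_comm
      _ = ∑ j : Fin b1, lam j * (s j).elim 0 m :=
          Finset.sum_congr rfl fun j _ => key (s j) (lam j)
  have hswap : ∑ i, m i * detProb lam σ i
      = ∑ s, σ s * ∑ j : Fin b1, lam j * (s j).elim 0 m := by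
    unfold detProb
    calc ∑ i, m i * ∑ s, σ s * ∑ j, (if s j = some i then lam j else 0)
        = ∑ i, ∑ s, m i * (σ s * ∑ j, (if s j = some i then lam j else 0)) :=
          Finset.sum_congr rfl fun i _ => Finset.mul_sum _ _ _
      _ = ∑ s, ∑ i, m i * (σ s * ∑ j, (if s j = some i then lam j else 0)) := Finset.sum_comm
      _ = ∑ s, σ s * ∑ i, m i * ∑ j, (if s j = some i then lam j else 0) := by
          apply Finset.sum_congr rfl
          intro s _
          rw [Finset.mul_sum]
          apply Finset.sum_congr rfl
          intro i _
          ring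
      _ = ∑ s, σ s * ∑ j : Fin b1, lam j * (s j).elim 0 m := by
          apply Finset.sum_congr rfl
          intro s _
          rw [inner_eq s]
  have hbound : ∑ s, σ s * ∑ j : Fin b1, lam j * (s j).elim 0 m
      ≤ ∑ j : Fin b1, lam j * (if h : (j : ℕ) < n then m ⟨(j : ℕ), h⟩ else 0) := by
    calc ∑ s, σ s * ∑ j : Fin b1, lam j * (s j).elim 0 m
        ≤ ∑ s, σ s * ∑ j : Fin b1, lam j * (if h : (j : ℕ) < n then m ⟨(j : ℕ), h⟩ else 0) := by
          apply Finset.sum_le_sum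
          intro s _
          by_cases h : σ s = 0
          · rw [h]; simp
          · exact mul_le_mul_of_nonneg_left
              (per_positioning hn m hm_anti hm0 lam hlam (fun j => (hlam01 j).1.le)
                s (hσvalid s h)) (hσ0 s)
      _ = ∑ j : Fin b1, lam j * (if h : (j : ℕ) < n then m ⟨(j : ℕ), h⟩ else 0) := by
          rw [← Finset.sum_mul, hσ1, one_mul]
  have hRHS : ∑ j : Fin b1, lam j * (if h : (j : ℕ) < n then m ⟨(j : ℕ), h⟩ else 0)
      = ∑ j : Fin b1, lam j * min ((cext n c (j : ℕ) : ℤ) : ℝ) q := by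
    apply Finset.sum_congr rfl
    intro j _
    have hjn : (j : ℕ) < n := lt_of_lt_of_le j.2 hb1n
    rw [dif_pos hjn]
    simp only [hmdef, cext, dif_pos hjn]
    push_cast
    rfl
  have hU : U c lam σ τs = (b2 : ℝ) - ∑ i, m i * detProb lam σ i := by
    unfold U
    rw [Finset.sum_congr rfl (fun i _ => by rw [hatk_m i])]
    rw [Finset.sum_congr rfl (fun i _ => mul_one_sub (m i) (detProb lam σ i))]
    rw [Finset.sum_sub_distrib, hsum_m]
  rw [hU]
  unfold valueFormula
  rw [← hkdef, ← hqdef]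
  apply sub_le_sub_left
  calc ∑ i, m i * detProb lam σ i
      = ∑ s, σ s * ∑ j : Fin b1, lam j * (s j).elim 0 m := hswap
    _ ≤ ∑ j : Fin b1, lam j * (if h : (j : ℕ) < n then m ⟨(j : ℕ), h⟩ else 0) := hbound
    _ = ∑ j : Fin b1, lam j * min ((cext n c (j : ℕ) : ℤ) : ℝ) q := hRHS
end

section
/- In the disjoint-monitoring-sets inspection game, if the defender plays any mixed inspection strategy σ1 satisfying p_{σ1}(v_i) = (1/k*)·Σ_{j=1}^{min(b1,k*)} λ_j for i ≤ k*, p_{σ1}(v_i) = λ_i for k* < i ≤ b1, and p_{σ1}(v_i) = 0 for i > max(b1,k*), then for every mixed attack strategy σ2 (with at most b2 attacks), U(σ1, σ2) ≤ b2 - Σ_{i=1}^{b1} λ_i · min( c_i , (1/k*)(b2 - Σ_{j=k*+1}^n c_j) ). -/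
open Finset

-- auxiliary
noncomputable def lamExt (b1 : ℕ) (lam : Fin b1 → ℝ) (m : ℕ) : ℝ :=
  if h : m < b1 then lam ⟨m, h⟩ else 0

def ccR (n : ℕ) (c : Fin n → ℕ) (m : ℕ) : ℝ :=
  if h : m < n then (c ⟨m, h⟩ : ℝ) else 0

lemma ccR_eq (n : ℕ) (c : Fin n → ℕ) (m : ℕ) :
    ccR n c m = ((cext n c m : ℤ) : ℝ) := by
  unfold ccR cext; split_ifs <;> simp

lemma filter_range_eq_Ico (n K : ℕ) :
    (Finset.range n).filter (fun m => K ≤ m) = Finset.Ico K n := by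
  ext m; simp only [Finset.mem_filter, Finset.mem_range, Finset.mem_Ico]; omega

lemma filter_range_eq_Ico' (n K : ℕ) :
    (Finset.range n).filter (fun m => ¬ m < K) = Finset.Ico K n := by
  ext m; simp only [Finset.mem_filter, Finset.mem_range, Finset.mem_Ico]; omega

lemma tailZ_real (n : ℕ) (c : Fin n → ℕ) (K : ℕ) :
    ((tailZ n c K : ℤ) : ℝ) = ∑ m ∈ Finset.Ico K n, ccR n c m := by
  unfold tailZ
  push_cast
  rw [Finset.sum_filter]
  have h1 : (∑ a : Fin n, if K ≤ (a : ℕ) then ((c a : ℕ) : ℝ) else 0)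
      = ∑ a : Fin n, (fun m => if K ≤ m then ccR n c m else 0) (a : ℕ) := by
    refine Finset.sum_congr rfl fun a _ => ?_
    simp [ccR, a.isLt]
  rw [h1, Fin.sum_univ_eq_sum_range (fun m => if K ≤ m then ccR n c m else 0),
    ← Finset.sum_filter, filter_range_eq_Ico]

lemma card_lt_filter (b1 K : ℕ) (h : K ≤ b1) :
    ((univ : Finset (Fin b1)).filter (fun j : Fin b1 => (j : ℕ) < K)).card = K := by
  have he : ((univ : Finset (Fin b1)).filter (fun j : Fin b1 => (j : ℕ) < K)) =
      (Finset.range K).attachFin (fun m hm => lt_of_lt_of_le (Finset.mem_range.mp hm) h) := by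
    ext j; simp [Finset.mem_attachFin]
  rw [he, Finset.card_attachFin, Finset.card_range]

lemma card_lt_filter_le (b1 K : ℕ) :
    ((univ : Finset (Fin b1)).filter (fun j : Fin b1 => (j : ℕ) < K)).card ≤ K := by
  calc ((univ : Finset (Fin b1)).filter (fun j : Fin b1 => (j : ℕ) < K)).card
      ≤ (Finset.range K).card := by
        apply Finset.card_le_card_of_injOn (fun j : Fin b1 => (j : ℕ))
        · intro j hj
          exact Finset.mem_range.mpr (Finset.mem_filter.mp hj).2
        · exact fun a _ b _ hab => Fin.val_injective hab
    _ = K := Finset.card_range K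

lemma fiber_card (n : ℕ) (c : Fin n → ℕ) (i : Fin n) (T : Finset (Component n c)) :
    (T.filter (fun e => e.1 = i)).card ≤ c i := by
  classical
  have h1 : T.filter (fun e => e.1 = i) ⊆
      (univ : Finset (Fin (c i))).map ⟨Sigma.mk i, sigma_mk_injective⟩ := by
    rintro ⟨a, x⟩ he
    simp only [Finset.mem_filter] at he
    obtain ⟨-, h⟩ := he
    subst h
    simp
  have := Finset.card_le_card h1
  simpa using this

lemma sum_fiber_card (n : ℕ) (c : Fin n → ℕ) (T : Finset (Component n c)) :
    ∑ i : Fin n, (T.filter (fun e => e.1 = i)).card = T.card := by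
  classical
  exact (Finset.card_eq_sum_card_fiberwise (f := Sigma.fst) (t := univ)
    (fun x _ => mem_univ _)).symm

/-- If the defender plays any mixed inspection strategy satisfying the
equilibrium detection-probability conditions, then against every mixed attack strategy
the expected number of undetected attacks is at most the value formula. -/
theorem inspection_strategy_guarantee (n b1 b2 : ℕ) (hn : 1 ≤ n) (hb1n : b1 ≤ n)
    (c : Fin n → ℕ) (hc : Antitone c) (hcpos : ∀ i, 1 ≤ c i)
    (lam : Fin b1 → ℝ) (hlam : Antitone lam) (hlam01 : ∀ j, 0 < lam j ∧ lam j ≤ 1)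
    (hb2 : 1 ≤ b2) (hb2E : b2 ≤ ∑ i, c i)
    (σs : Pos n b1 → ℝ) (hσs : MixedInsp n b1 σs)
    (hdet1 : ∀ i : Fin n, (i : ℕ) < kstar n b2 c →
      detProb lam σs i =
        (∑ j ∈ Finset.univ.filter (fun j : Fin b1 => (j : ℕ) < kstar n b2 c), lam j) /
          (kstar n b2 c))
    (hdet2 : ∀ i : Fin n, ∀ h : (i : ℕ) < b1, kstar n b2 c ≤ (i : ℕ) →
      detProb lam σs i = lam ⟨(i : ℕ), h⟩)
    (hdet3 : ∀ i : Fin n, max b1 (kstar n b2 c) ≤ (i : ℕ) → detProb lam σs i = 0) :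
    ∀ τ, MixedAtk n b2 c τ → U c lam σs τ ≤ valueFormula n b1 b2 c lam := by
  classical
  intro τ hτ
  obtain ⟨hτ0, hτ1, hτb⟩ := hτ
  set K := kstar n b2 c with hKdef
  -- K is a member of the defining set; in particular 1 ≤ K
  have hKmem : 1 ≤ K ∧ K ≤ n ∧ ((K : ℤ) * cext n c K ≤ (b2 : ℤ) - tailZ n c K) := by
    rw [hKdef]
    unfold kstar
    apply Nat.sInf_mem (s := {k | 1 ≤ k ∧ k ≤ n ∧ (k : ℤ) * cext n c k ≤ (b2 : ℤ) - tailZ n c k})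
    refine ⟨n, hn, le_rfl, ?_⟩
    have h1 : cext n c n = 0 := dif_neg (lt_irrefl n)
    have h2 : tailZ n c n = 0 := by
      unfold tailZ
      rw [Finset.sum_filter]
      exact Finset.sum_eq_zero fun j _ => if_neg (Nat.not_le.mpr j.isLt)
    rw [h1, h2, mul_zero, sub_zero]
    exact_mod_cast Nat.zero_le b2
  have hK1 : 1 ≤ K := hKmem.1
  have hKn : K ≤ n := hKmem.2.1
  have hKR : (0 : ℝ) < (K : ℝ) := by exact_mod_cast hK1
  set S1 : ℝ := ∑ j ∈ Finset.univ.filter (fun j : Fin b1 => (j : ℕ) < K), lam j with hS1def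
  set P : ℝ := S1 / (K : ℝ) with hPdef
  set L : ℕ → ℝ := lamExt b1 lam with hLdef
  set T : ℝ := ((tailZ n c K : ℤ) : ℝ) with hTdef
  set Q : ℝ := ((b2 : ℝ) - T) / (K : ℝ) with hQdef
  have hL0 : ∀ m, 0 ≤ L m := by
    intro m
    rw [hLdef]; unfold lamExt
    split_ifs with h
    · exact (hlam01 ⟨m, h⟩).1.le
    · exact le_refl 0
  have hS1a : S1 ≤ (K : ℝ) := by
    calc S1 ≤ ∑ j ∈ Finset.univ.filter (fun j : Fin b1 => (j : ℕ) < K), (1 : ℝ) :=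
          Finset.sum_le_sum fun j _ => (hlam01 j).2
      _ = ((Finset.univ.filter (fun j : Fin b1 => (j : ℕ) < K)).card : ℝ) := by simp
      _ ≤ (K : ℝ) := by exact_mod_cast card_lt_filter_le b1 K
  have hS1b : 0 ≤ S1 := Finset.sum_nonneg fun j _ => (hlam01 j).1.le
  have hP1 : P ≤ 1 := by
    rw [hPdef]
    exact (div_le_one hKR).mpr hS1a
  have hP0 : 0 ≤ P := div_nonneg hS1b hKR.le
  -- P dominates lam at indices ≥ K
  have hPlam : ∀ (m : ℕ) (h : m < b1), K ≤ m → lam ⟨m, h⟩ ≤ P := by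
    intro m h hKm
    have hKb1 : K ≤ b1 := le_of_lt (lt_of_le_of_lt hKm h)
    have hcard := card_lt_filter b1 K hKb1
    have hkey : (K : ℝ) * lam ⟨m, h⟩ ≤ S1 := by
      calc (K : ℝ) * lam ⟨m, h⟩
          = ∑ _j ∈ Finset.univ.filter (fun j : Fin b1 => (j : ℕ) < K), lam ⟨m, h⟩ := by
            rw [Finset.sum_const, hcard, nsmul_eq_mul]
        _ ≤ S1 := by
            rw [hS1def]
            refine Finset.sum_le_sum fun j hj => ?_
            have hjK : (j : ℕ) < K := (Finset.mem_filter.mp hj).2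
            exact hlam (Fin.le_def.mpr (le_of_lt (lt_of_lt_of_le hjK hKm)))
    rw [hPdef, le_div_iff₀ hKR]
    linarith
  set z : Fin n → ℝ := fun i => if K ≤ (i : ℕ) then P - L (i : ℕ) else 0 with hzdef
  have hz0 : ∀ i, 0 ≤ z i := by
    intro i
    rw [hzdef]
    dsimp only
    split_ifs with h
    · have : L (i : ℕ) ≤ P := by
        rw [hLdef]; unfold lamExt
        split_ifs with h2
        · exact hPlam (i : ℕ) h2 h
        · exact hP0
      linarith
    · exact le_refl 0
  -- pointwise dual bound
  have hpt : ∀ i : Fin n, 1 - detProb lam σs i ≤ (1 - P) + z i := by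
    intro i
    rcases lt_or_ge (i : ℕ) K with h | h
    · have hz : z i = 0 := by rw [hzdef]; exact if_neg (Nat.not_le.mpr h)
      rw [hdet1 i h, hz]
      linarith
    · rcases lt_or_ge (i : ℕ) b1 with h2 | h2
      · have hz : z i = P - lam ⟨(i : ℕ), h2⟩ := by
          rw [hzdef]
          dsimp only
          rw [if_pos h, hLdef]
          unfold lamExt
          rw [dif_pos h2]
        rw [hdet2 i h2 h, hz]
        linarith
      · have hz : z i = P := by
          rw [hzdef]
          dsimp only
          rw [if_pos h, hLdef]
          unfold lamExt
          rw [dif_neg (Nat.not_lt.mpr h2), sub_zero]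
        rw [hdet3 i (max_le h2 h), hz]
        linarith
  -- attack probability facts
  have hq0 : ∀ i, 0 ≤ atkProb τ i := fun i =>
    Finset.sum_nonneg fun T' _ => mul_nonneg (hτ0 T') (Nat.cast_nonneg _)
  have hqc : ∀ i, atkProb τ i ≤ (c i : ℝ) := by
    intro i
    calc atkProb τ i ≤ ∑ T', τ T' * (c i : ℝ) :=
          Finset.sum_le_sum fun T' _ =>
            mul_le_mul_of_nonneg_left (Nat.cast_le.mpr (fiber_card n c i T')) (hτ0 T')
      _ = (c i : ℝ) := by rw [← Finset.sum_mul, hτ1, one_mul]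
  have hqsum : ∑ i, atkProb τ i ≤ (b2 : ℝ) := by
    have h1 : ∑ i, atkProb τ i = ∑ T', τ T' * (T'.card : ℝ) := by
      unfold atkProb
      rw [Finset.sum_comm]
      refine Finset.sum_congr rfl fun T' _ => ?_
      rw [← Finset.mul_sum]
      congr 1
      exact_mod_cast sum_fiber_card n c T'
    rw [h1]
    calc ∑ T', τ T' * (T'.card : ℝ) ≤ ∑ T', τ T' * (b2 : ℝ) := by
          refine Finset.sum_le_sum fun T' _ => ?_
          by_cases hT : τ T' = 0
          · simp [hT]
          · exact mul_le_mul_of_nonneg_left (Nat.cast_le.mpr (hτb T' hT)) (hτ0 T')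
      _ = (b2 : ℝ) := by rw [← Finset.sum_mul, hτ1, one_mul]
  -- main chain
  have hchain : U c lam σs τ ≤ (1 - P) * (b2 : ℝ) + ∑ i : Fin n, (c i : ℝ) * z i := by
    calc U c lam σs τ = ∑ i, atkProb τ i * (1 - detProb lam σs i) := rfl
      _ ≤ ∑ i, atkProb τ i * ((1 - P) + z i) :=
          Finset.sum_le_sum fun i _ => mul_le_mul_of_nonneg_left (hpt i) (hq0 i)
      _ = (1 - P) * (∑ i, atkProb τ i) + ∑ i, atkProb τ i * z i := by
          rw [Finset.mul_sum, ← Finset.sum_add_distrib]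
          exact Finset.sum_congr rfl fun i _ => by ring
      _ ≤ (1 - P) * (b2 : ℝ) + ∑ i : Fin n, (c i : ℝ) * z i := by
          have h1 : (1 - P) * (∑ i, atkProb τ i) ≤ (1 - P) * (b2 : ℝ) :=
            mul_le_mul_of_nonneg_left hqsum (by linarith)
          have h2 : ∑ i, atkProb τ i * z i ≤ ∑ i : Fin n, (c i : ℝ) * z i :=
            Finset.sum_le_sum fun i _ => mul_le_mul_of_nonneg_right (hqc i) (hz0 i)
          linarith
  -- compute ∑ c_i z_i
  set S2 : ℝ := ∑ m ∈ Finset.Ico K b1, ccR n c m * L m with hS2def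
  have hA : ∑ i : Fin n, (c i : ℝ) * z i = P * T - S2 := by
    have e1 : ∀ i : Fin n, (c i : ℝ) * z i =
        (fun m => if K ≤ m then ccR n c m * (P - L m) else 0) (i : ℕ) := by
      intro i
      rw [hzdef]
      dsimp only
      have hcc : ccR n c (i : ℕ) = (c i : ℝ) := by
        unfold ccR; rw [dif_pos i.isLt]
      split_ifs with h
      · rw [hcc]
      · rw [mul_zero]
    calc ∑ i : Fin n, (c i : ℝ) * z i
        = ∑ i : Fin n, (fun m => if K ≤ m then ccR n c m * (P - L m) else 0) (i : ℕ) :=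
          Finset.sum_congr rfl fun i _ => e1 i
      _ = ∑ m ∈ Finset.range n, (if K ≤ m then ccR n c m * (P - L m) else 0) :=
          Fin.sum_univ_eq_sum_range (fun m => if K ≤ m then ccR n c m * (P - L m) else 0) n
      _ = ∑ m ∈ Finset.Ico K n, ccR n c m * (P - L m) := by
          rw [← Finset.sum_filter, filter_range_eq_Ico]
      _ = P * (∑ m ∈ Finset.Ico K n, ccR n c m) - ∑ m ∈ Finset.Ico K n, ccR n c m * L m := by
          rw [Finset.mul_sum, ← Finset.sum_sub_distrib]
          exact Finset.sum_congr rfl fun m _ => by ring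
      _ = P * T - S2 := by
          rw [hTdef, tailZ_real, hS2def]
          congr 1
          refine (Finset.sum_subset (Finset.Ico_subset_Ico_right hb1n) ?_).symm
          intro m hm hm2
          have h1 : K ≤ m := (Finset.mem_Ico.mp hm).1
          have h2 : b1 ≤ m := by
            rcases Nat.lt_or_ge m b1 with h | h
            · exact absurd (Finset.mem_Ico.mpr ⟨h1, h⟩) hm2
            · exact h
          have : L m = 0 := by
            rw [hLdef]; unfold lamExt; exact dif_neg (Nat.not_lt.mpr h2)
          rw [this, mul_zero]
  -- rewrite the value formula
  have hB : valueFormula n b1 b2 c lam = (b2 : ℝ) - ∑ m ∈ Finset.range b1, L m * min (ccR n c m) Q := by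
    unfold valueFormula
    rw [← hKdef, ← hTdef, ← hQdef]
    congr 1
    have e2 : ∀ j : Fin b1, lam j * min ((cext n c (j : ℕ) : ℝ)) Q =
        (fun m => L m * min (ccR n c m) Q) (j : ℕ) := by
      intro j
      dsimp only
      rw [ccR_eq, hLdef]
      unfold lamExt
      rw [dif_pos j.isLt]
    calc ∑ j : Fin b1, lam j * min ((cext n c (j : ℕ) : ℝ)) Q
        = ∑ j : Fin b1, (fun m => L m * min (ccR n c m) Q) (j : ℕ) :=
          Finset.sum_congr rfl fun j _ => e2 j
      _ = ∑ m ∈ Finset.range b1, L m * min (ccR n c m) Q :=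
          Fin.sum_univ_eq_sum_range (fun m => L m * min (ccR n c m) Q) b1
  -- S1 as a range sum
  have hS1range : S1 = ∑ m ∈ (Finset.range b1).filter (fun m => m < K), L m := by
    rw [hS1def]
    have e3 : ∀ j : Fin b1, (if (j : ℕ) < K then lam j else 0) =
        (fun m => if m < K then L m else 0) (j : ℕ) := by
      intro j
      dsimp only
      rw [hLdef]; unfold lamExt
      rw [dif_pos j.isLt]
    calc ∑ j ∈ Finset.univ.filter (fun j : Fin b1 => (j : ℕ) < K), lam j
        = ∑ j : Fin b1, (if (j : ℕ) < K then lam j else 0) := Finset.sum_filter _ _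
      _ = ∑ j : Fin b1, (fun m => if m < K then L m else 0) (j : ℕ) :=
          Finset.sum_congr rfl fun j _ => e3 j
      _ = ∑ m ∈ Finset.range b1, (if m < K then L m else 0) :=
          Fin.sum_univ_eq_sum_range (fun m => if m < K then L m else 0) b1
      _ = ∑ m ∈ (Finset.range b1).filter (fun m => m < K), L m := (Finset.sum_filter _ _).symm
  -- final algebra
  have hQK : Q * (K : ℝ) = (b2 : ℝ) - T := div_mul_cancel₀ _ (ne_of_gt hKR)
  have hPT : P * ((b2 : ℝ) - T) = S1 * Q := by
    rw [hPdef, ← hQK]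
    field_simp
  have hfinal : ∑ m ∈ Finset.range b1, L m * min (ccR n c m) Q ≤ S1 * Q + S2 := by
    rw [hS1range, ← Finset.sum_filter_add_sum_filter_not (Finset.range b1) (fun m => m < K)
      (fun m => L m * min (ccR n c m) Q)]
    have hpart1 : ∑ m ∈ (Finset.range b1).filter (fun m => m < K), L m * min (ccR n c m) Q
        ≤ (∑ m ∈ (Finset.range b1).filter (fun m => m < K), L m) * Q := by
      rw [Finset.sum_mul]
      exact Finset.sum_le_sum fun m _ =>
        mul_le_mul_of_nonneg_left (min_le_right _ _) (hL0 m)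
    have hpart2 : ∑ m ∈ (Finset.range b1).filter (fun m => ¬ m < K), L m * min (ccR n c m) Q
        ≤ S2 := by
      rw [filter_range_eq_Ico' b1 K, hS2def]
      refine Finset.sum_le_sum fun m _ => ?_
      calc L m * min (ccR n c m) Q ≤ L m * ccR n c m :=
            mul_le_mul_of_nonneg_left (min_le_left _ _) (hL0 m)
        _ = ccR n c m * L m := mul_comm _ _
    linarith
  rw [hB]
  have := hA
  linarith [hchain, hfinal, hPT, hA]
end

section
/- In the disjoint-monitoring-sets inspection game, the set of equilibrium inspection strategies is identical for every attacker budget b2 satisfying 1 ≤ b2 < n·c_n; in particular, every equilibrium inspection strategy for b2 = 1 is an equilibrium inspection strategy for any such b2 and vice versa. -/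
open Finset

/-- An equilibrium (minimax-optimal) inspection strategy for budget `b2`. -/
def IsEquilInsp (n b1 b2 : ℕ) (c : Fin n → ℕ) (lam : Fin b1 → ℝ) (σ : Pos n b1 → ℝ) : Prop :=
  MixedInsp n b1 σ ∧ ∀ σ', MixedInsp n b1 σ' →
    sSup {x | ∃ τ, MixedAtk n b2 c τ ∧ x = U c lam σ τ} ≤
      sSup {x | ∃ τ, MixedAtk n b2 c τ ∧ x = U c lam σ' τ}

section Aux
variable {n b1 b2 : ℕ} {c : Fin n → ℕ} {lam : Fin b1 → ℝ}

lemma fiberSum {α β : Type*} [Fintype α] [Fintype β] [DecidableEq β]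
    (g : α → β) (h : β → ℝ) :
    ∑ s : β, ((univ.filter (fun k : α => g k = s)).card : ℝ) * h s = ∑ k : α, h (g k) := by
  have key : ∀ s : β, ((univ.filter (fun k : α => g k = s)).card : ℝ) * h s
      = ∑ k ∈ univ.filter (fun k : α => g k = s), h (g k) := by
    intro s
    rw [Finset.sum_congr rfl (fun k hk => by rw [(Finset.mem_filter.mp hk).2])]
    rw [Finset.sum_const, nsmul_eq_mul]
  rw [Finset.sum_congr rfl (fun s _ => key s), Finset.sum_fiberwise]

lemma fiberCard {α β : Type*} [Fintype α] [Fintype β] [DecidableEq β] (g : α → β) :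
    ∑ s : β, ((univ.filter (fun k : α => g k = s)).card : ℝ) = (Fintype.card α : ℝ) := by
  have := fiberSum g (fun _ => (1:ℝ))
  simpa using this

lemma sum_card_filter_fst (T : Finset (Component n c)) :
    ∑ i, ((T.filter (fun e => e.1 = i)).card : ℝ) = (T.card : ℝ) := by
  have := Finset.card_eq_sum_card_fiberwise
    (f := fun e : Component n c => e.1) (s := T) (t := univ) (fun x _ => mem_univ _)
  exact_mod_cast this.symm

lemma atkProb_nonneg {τ : Finset (Component n c) → ℝ} (hτ : MixedAtk n b2 c τ) (i : Fin n) :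
    0 ≤ atkProb τ i :=
  Finset.sum_nonneg fun T _ => mul_nonneg (hτ.1 T) (by positivity)

lemma sum_atkProb_le {τ : Finset (Component n c) → ℝ} (hτ : MixedAtk n b2 c τ) :
    ∑ i, atkProb τ i ≤ b2 := by
  unfold atkProb
  rw [Finset.sum_comm]
  have h1 : ∀ T : Finset (Component n c),
      ∑ i, τ T * ((T.filter (fun e => e.1 = i)).card : ℝ) = τ T * T.card := by
    intro T; rw [← Finset.mul_sum, sum_card_filter_fst]
  rw [Finset.sum_congr rfl fun T _ => h1 T]
  calc ∑ T : Finset (Component n c), τ T * T.card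
      ≤ ∑ T : Finset (Component n c), τ T * b2 := by
        apply Finset.sum_le_sum; intro T _
        by_cases h : τ T = 0
        · simp [h]
        · exact mul_le_mul_of_nonneg_left (Nat.cast_le.mpr (hτ.2.2 T h)) (hτ.1 T)
    _ = b2 := by rw [← Finset.sum_mul, hτ.2.1, one_mul]

lemma detProb_nonneg {σ : Pos n b1 → ℝ} (hσ : MixedInsp n b1 σ) (hl0 : ∀ j, 0 ≤ lam j)
    (i : Fin n) : 0 ≤ detProb lam σ i := by
  apply Finset.sum_nonneg; intro s _
  apply mul_nonneg (hσ.1 s)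
  apply Finset.sum_nonneg; intro j _
  split
  · exact hl0 j
  · exact le_refl 0

lemma sum_detProb_le {σ : Pos n b1 → ℝ} (hσ : MixedInsp n b1 σ) (hl0 : ∀ j, 0 ≤ lam j) :
    ∑ i, detProb lam σ i ≤ ∑ j, lam j := by
  unfold detProb
  rw [Finset.sum_comm]
  have key : ∀ s : Pos n b1, ∑ i, σ s * ∑ j, (if s j = some i then lam j else 0)
      ≤ σ s * ∑ j, lam j := by
    intro s
    rw [← Finset.mul_sum]
    apply mul_le_mul_of_nonneg_left _ (hσ.1 s)
    rw [Finset.sum_comm]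
    apply Finset.sum_le_sum
    intro j _
    cases h : s j with
    | none => simp [h]; exact hl0 j
    | some i0 =>
        have : ∀ i : Fin n, (if some i0 = some i then lam j else 0) = (if i = i0 then lam j else 0) := by
          intro i; simp [eq_comm]
        rw [Finset.sum_congr rfl fun i _ => this i, Finset.sum_ite_eq' univ i0 (fun _ => lam j)]
        simp
  calc ∑ s, ∑ i, σ s * ∑ j, (if s j = some i then lam j else 0)
      ≤ ∑ s, σ s * ∑ j, lam j := Finset.sum_le_sum fun s _ => key s
    _ = ∑ j, lam j := by rw [← Finset.sum_mul, hσ.2.1, one_mul]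

end Aux

section Equalizer
open scoped Fin.NatCast Fin.CommRing
variable {n b1 : ℕ} {lam : Fin b1 → ℝ}

lemma exists_equalizer (hn : 1 ≤ n) (hb1n : b1 ≤ n) :
    ∃ σ : Pos n b1 → ℝ, MixedInsp n b1 σ ∧
      ∀ i, detProb lam σ i = (∑ j, lam j) / n := by
  classical
  haveI : NeZero n := ⟨by omega⟩
  have hnR : (0:ℝ) < n := by exact_mod_cast hn
  set e : Fin b1 → Fin n := fun j => ⟨(j:ℕ), lt_of_lt_of_le j.2 hb1n⟩ with he
  set sh : Fin n → Pos n b1 := fun k j => some (e j + k) with hsh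
  refine ⟨fun s => ((univ.filter (fun k : Fin n => sh k = s)).card : ℝ) / n, ⟨?_, ?_, ?_⟩, ?_⟩
  · intro s; positivity
  · rw [← Finset.sum_div]
    rw [fiberCard sh]
    simp [Fintype.card_fin]
  · intro s hs
    have hne : (univ.filter (fun k : Fin n => sh k = s)).Nonempty := by
      by_contra hemp
      rw [Finset.not_nonempty_iff_eq_empty] at hemp
      apply hs; simp [hemp]
    obtain ⟨k, hk⟩ := hne
    have hsk : sh k = s := (Finset.mem_filter.mp hk).2
    intro j j' hjj _
    rw [← hsk] at hjj
    have h1 : e j + k = e j' + k := by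
      simpa [hsh] using hjj
    have h2 : e j = e j' := add_right_cancel h1
    simp only [he, Fin.mk.injEq] at h2
    exact Fin.ext h2
  · intro i
    unfold detProb
    have h1 : ∀ s : Pos n b1,
        ((univ.filter (fun k : Fin n => sh k = s)).card : ℝ) / n
          * ∑ j, (if s j = some i then lam j else 0)
        = (((univ.filter (fun k : Fin n => sh k = s)).card : ℝ)
            * ∑ j, (if s j = some i then lam j else 0)) / n := by
      intro s; ring
    rw [Finset.sum_congr rfl fun s _ => h1 s, ← Finset.sum_div]
    rw [fiberSum sh (fun s => ∑ j, (if s j = some i then lam j else 0))]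
    congr 1
    have h2 : ∀ k : Fin n, ∑ j, (if sh k j = some i then lam j else 0)
        = ∑ j, (if e j + k = i then lam j else 0) := by
      intro k
      apply Finset.sum_congr rfl
      intro j _
      simp [hsh]
    rw [Finset.sum_congr rfl fun k _ => h2 k, Finset.sum_comm]
    apply Finset.sum_congr rfl
    intro j _
    have h3 : ∀ k : Fin n, (if e j + k = i then lam j else 0)
        = (if k = i - e j then lam j else 0) := by
      intro k
      congr 1
      simp only [eq_iff_iff]
      constructor
      · intro h; rw [← h]; ring
      · intro h; rw [h]; ring
    rw [Finset.sum_congr rfl fun k _ => h3 k, Finset.sum_ite_eq' univ (i - e j) (fun _ => lam j)]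
    simp

end Equalizer

section Tau
open scoped Fin.NatCast Fin.CommRing
variable {n b2 : ℕ} {c : Fin n → ℕ}

set_option maxHeartbeats 1000000 in
lemma tau_exists (hn : 1 ≤ n) (hc : Antitone c) (hcpos : ∀ i, 1 ≤ c i)
    (hb2 : 1 ≤ b2) (hlt : b2 < n * c ⟨n - 1, by omega⟩) (i0 : Fin n) :
    ∃ τ : Finset (Component n c) → ℝ, MixedAtk n b2 c τ ∧
      ∃ A B : ℝ, 0 ≤ B ∧ B < A ∧ A + ((n : ℝ) - 1) * B = b2 ∧
        ∀ i, atkProb τ i = if i = i0 then A else B := by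
  classical
  by_cases hcase : b2 ≤ c i0
  · -- point mass on b2 components of node i0
    set T0 : Finset (Component n c) :=
      ((univ : Finset (Fin (c i0))).filter (fun t : Fin (c i0) => (t : ℕ) < b2)).map
        ⟨Sigma.mk i0, sigma_mk_injective⟩ with hT0
    have hfilter : ((univ : Finset (Fin (c i0))).filter (fun t : Fin (c i0) => (t : ℕ) < b2)) =
        (univ : Finset (Fin b2)).map (Fin.castLEEmb hcase) := by
      ext t
      simp only [Finset.mem_filter, Finset.mem_univ, true_and, Finset.mem_map]
      constructor
      · intro ht
        exact ⟨⟨(t:ℕ), ht⟩, by simp [Fin.castLEEmb, Fin.castLE]⟩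
      · rintro ⟨u, hu⟩
        rw [← hu]
        simp [Fin.castLEEmb, Fin.castLE]
    have hcard0 : T0.card = b2 := by
      rw [hT0, Finset.card_map, hfilter, Finset.card_map, Finset.card_univ, Fintype.card_fin]
    have hT0fst : ∀ e ∈ T0, e.1 = i0 := by
      intro e he
      rw [hT0] at he
      obtain ⟨t, _, ht⟩ := Finset.mem_map.mp he
      rw [← ht]; rfl
    refine ⟨fun T => if T = T0 then 1 else 0, ⟨?_, ?_, ?_⟩, (b2 : ℝ), 0, le_refl _,
        by exact_mod_cast hb2, by ring, ?_⟩
    · intro T; dsimp only; split <;> norm_num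
    · rw [Finset.sum_ite_eq' univ T0 (fun _ => (1:ℝ))]; simp
    · intro T hT
      have : T = T0 := by by_contra h; apply hT; simp [h]
      rw [this, hcard0]
    · intro i
      unfold atkProb
      have h1 : ∀ T : Finset (Component n c),
          (if T = T0 then (1:ℝ) else 0) * ((T.filter (fun e => e.1 = i)).card : ℝ)
          = (if T = T0 then ((T0.filter (fun e => e.1 = i)).card : ℝ) else 0) := by
        intro T
        split
        · next h => rw [h]; ring
        · ring
      rw [Finset.sum_congr rfl fun T _ => h1 T,
        Finset.sum_ite_eq' univ T0 (fun _ => ((T0.filter (fun e => e.1 = i)).card : ℝ))]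
      simp only [Finset.mem_univ, if_true]
      by_cases hi : i = i0
      · subst hi
        rw [Finset.filter_true_of_mem (fun e he => hT0fst e he), hcard0]
        simp
      · rw [Finset.filter_false_of_mem (fun e he => by rw [hT0fst e he]; exact fun h => hi h.symm)]
        simp [hi]
  · push_neg at hcase   -- c i0 < b2
    have hcnle : ∀ i : Fin n, c ⟨n - 1, by omega⟩ ≤ c i := by
      intro i
      apply hc
      rw [Fin.le_def]
      have := i.2
      simp
      omega
    obtain ⟨cn, hcn⟩ : ∃ cn, cn = c ⟨n - 1, by omega⟩ := ⟨_, rfl⟩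
    have hcnle' : ∀ i : Fin n, cn ≤ c i := by rw [hcn]; exact hcnle
    have hcnpos : 1 ≤ cn := by rw [hcn]; exact hcpos _
    have hltcn : b2 < n * cn := by rw [hcn]; exact hlt
    have hn2 : 2 ≤ n := by
      have h1 : cn < n * cn := lt_of_le_of_lt (le_trans (hcnle' i0) (le_of_lt hcase)) hltcn
      by_contra hcon
      push_neg at hcon
      have h2 : n * cn ≤ 1 * cn := Nat.mul_le_mul_right cn (by omega)
      omega
    obtain ⟨n1, hn1d⟩ : ∃ n1, n1 = n - 1 := ⟨_, rfl⟩
    have hn1pos : 0 < n1 := by omega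
    haveI : NeZero n1 := ⟨by omega⟩
    have hn1R : (0:ℝ) < n1 := by exact_mod_cast hn1pos
    obtain ⟨w, hwd⟩ : ∃ w, w = b2 - c i0 := ⟨_, rfl⟩
    have hwpos : 0 < w := by omega
    have hwle : w ≤ n1 * cn := by
      have h1 : n1 * cn + cn = n * cn := by
        have h2 : n1 + 1 = n := by omega
        calc n1 * cn + cn = (n1 + 1) * cn := by ring
          _ = n * cn := by rw [h2]
      have := hcnle' i0
      omega
    have hb2n : b2 < n * c i0 := lt_of_lt_of_le hltcn (Nat.mul_le_mul_left n (hcnle' i0))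
    have hwlt : w < n1 * c i0 := by
      have h1 : n1 * c i0 + c i0 = n * c i0 := by
        have h2 : n1 + 1 = n := by omega
        calc n1 * c i0 + c i0 = (n1 + 1) * c i0 := by ring
          _ = n * c i0 := by rw [h2]
      omega
    obtain ⟨ψ, hψ⟩ : ∃ ψ : Fin n1 → Fin n,
        ∀ k, (ψ k : ℕ) = if (k:ℕ) < (i0:ℕ) then (k:ℕ) else (k:ℕ)+1 := by
      refine ⟨fun k => if h : (k:ℕ) < (i0:ℕ)
          then ⟨(k:ℕ), by have := k.2; have := i0.2; omega⟩
          else ⟨(k:ℕ)+1, by have := k.2; omega⟩, ?_⟩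
      intro k
      by_cases h : (k:ℕ) < (i0:ℕ) <;> simp [h]
    have hψne : ∀ k, ψ k ≠ i0 := by
      intro k h
      have h1 := congrArg Fin.val h
      rw [hψ k] at h1
      have := k.2
      split_ifs at h1 <;> omega
    have hψinj : Function.Injective ψ := by
      intro k k' h
      have h1 := congrArg Fin.val h
      rw [hψ k, hψ k'] at h1
      apply Fin.ext
      split_ifs at h1 <;> omega
    have hψsurj : ∀ i : Fin n, i ≠ i0 → ∃ k : Fin n1, ψ k = i := by
      intro i hi
      have hi2 := i.2
      have hi02 := i0.2
      have hne : (i:ℕ) ≠ (i0:ℕ) := fun hh => hi (Fin.ext hh)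
      by_cases h : (i:ℕ) < (i0:ℕ)
      · refine ⟨⟨(i:ℕ), by omega⟩, ?_⟩
        apply Fin.ext
        rw [hψ]
        simp [h]
      · have h2 : (i0:ℕ) < (i:ℕ) := by omega
        refine ⟨⟨(i:ℕ) - 1, by omega⟩, ?_⟩
        apply Fin.ext
        rw [hψ]
        have hcond : ¬ (((⟨(i:ℕ) - 1, by omega⟩ : Fin n1)) : ℕ) < (i0:ℕ) := by
          simp
          omega
        rw [if_neg hcond]
        simp
        omega
    have hslot : ∀ u : Fin w, (u:ℕ) / n1 < cn := by
      intro u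
      rw [Nat.div_lt_iff_lt_mul hn1pos]
      calc (u:ℕ) < w := u.2
        _ ≤ n1 * cn := hwle
        _ = cn * n1 := Nat.mul_comm _ _
    have hslot' : ∀ (u : Fin w) (j : Fin n), (u:ℕ)/n1 < c j :=
      fun u j => lt_of_lt_of_le (hslot u) (hcnle' j)
    obtain ⟨f, hf1, hf2⟩ : ∃ f : Fin n1 → Fin w → Component n c,
        (∀ r u, (f r u).1 = ψ (r + ((u:ℕ) : Fin n1)))
          ∧ (∀ r u, ((f r u).2 : ℕ) = (u:ℕ)/n1) :=
      ⟨fun r u => ⟨ψ (r + ((u:ℕ) : Fin n1)), ⟨(u:ℕ)/n1, hslot' u _⟩⟩,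
        fun r u => rfl, fun r u => rfl⟩
    have hfinj : ∀ r, Function.Injective (f r) := by
      intro r u u' h
      have h1 : ψ (r + ((u:ℕ) : Fin n1)) = ψ (r + ((u':ℕ) : Fin n1)) := by
        rw [← hf1 r u, ← hf1 r u']
        exact congrArg Sigma.fst h
      have hk : r + ((u:ℕ) : Fin n1) = r + ((u':ℕ) : Fin n1) := hψinj h1
      have hmod : (u:ℕ) % n1 = (u':ℕ) % n1 := by
        have h2 := add_left_cancel hk
        have h3 := congrArg Fin.val h2
        rwa [Fin.val_natCast, Fin.val_natCast] at h3
      have hdiv : (u:ℕ) / n1 = (u':ℕ) / n1 := by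
        have h4 := congrArg (fun e : Component n c => (e.2 : ℕ)) h
        rw [← hf2 r u, ← hf2 r u']
        exact h4
      have h5 : (u:ℕ) = (u':ℕ) := by
        rw [← Nat.div_add_mod (u:ℕ) n1, ← Nat.div_add_mod (u':ℕ) n1, hdiv, hmod]
      exact Fin.ext h5
    obtain ⟨T0, hT0⟩ : ∃ T0 : Finset (Component n c),
        T0 = (univ : Finset (Fin (c i0))).map ⟨Sigma.mk i0, sigma_mk_injective⟩ := ⟨_, rfl⟩
    have hT0card : T0.card = c i0 := by
      rw [hT0, Finset.card_map, Finset.card_univ, Fintype.card_fin]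
    have hT0fst : ∀ e ∈ T0, e.1 = i0 := by
      intro e he
      rw [hT0] at he
      obtain ⟨t, _, ht⟩ := Finset.mem_map.mp he
      rw [← ht]; rfl
    obtain ⟨W, hW⟩ : ∃ W : Fin n1 → Finset (Component n c),
        ∀ r, W r = (univ : Finset (Fin w)).image (f r) := ⟨_, fun r => rfl⟩
    have hWfst : ∀ r, ∀ e ∈ W r, e.1 ≠ i0 := by
      intro r e he
      rw [hW r] at he
      obtain ⟨u, _, hu⟩ := Finset.mem_image.mp he
      rw [← hu, hf1]
      exact hψne _
    have hWcard : ∀ r, (W r).card = w := by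
      intro r
      rw [hW r, Finset.card_image_of_injective _ (hfinj r), Finset.card_univ, Fintype.card_fin]
    have hdisj : ∀ r, Disjoint T0 (W r) := by
      intro r
      rw [Finset.disjoint_left]
      intro e he hw'
      exact hWfst r e hw' (hT0fst e he)
    obtain ⟨P, hP⟩ : ∃ P : Fin n1 → Finset (Component n c),
        ∀ r, P r = T0 ∪ W r := ⟨_, fun r => rfl⟩
    have hPcard : ∀ r, (P r).card = b2 := by
      intro r
      rw [hP r, Finset.card_union_of_disjoint (hdisj r), hT0card, hWcard]
      omega
    obtain ⟨τ, hτ⟩ : ∃ τ : Finset (Component n c) → ℝ,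
        ∀ T, τ T = ((univ.filter (fun r : Fin n1 => P r = T)).card : ℝ) / n1 :=
      ⟨_, fun T => rfl⟩
    refine ⟨τ, ⟨?_, ?_, ?_⟩, (c i0 : ℝ), (w : ℝ)/n1,
        div_nonneg (Nat.cast_nonneg _) hn1R.le, ?_, ?_, ?_⟩
    · intro T
      rw [hτ T]
      exact div_nonneg (Nat.cast_nonneg _) hn1R.le
    · rw [Finset.sum_congr rfl fun T _ => hτ T, ← Finset.sum_div, fiberCard P]
      rw [Fintype.card_fin]
      exact div_self (ne_of_gt hn1R)
    · intro T hT
      have hne : (univ.filter (fun r : Fin n1 => P r = T)).Nonempty := by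
        by_contra hemp
        rw [Finset.not_nonempty_iff_eq_empty] at hemp
        apply hT; rw [hτ T]; simp [hemp]
      obtain ⟨r, hr⟩ := hne
      have hPr : P r = T := (Finset.mem_filter.mp hr).2
      rw [← hPr, hPcard r]
    · -- B < A
      rw [div_lt_iff₀ hn1R]
      have h9 : w < c i0 * n1 := by rw [Nat.mul_comm]; exact hwlt
      exact_mod_cast h9
    · -- A + (n-1) B = b2
      have hcast : ((n1:ℕ):ℝ) = (n:ℝ) - 1 := by
        rw [hn1d, Nat.cast_sub hn]; simp
      rw [← hcast, mul_div_assoc', mul_comm, ← mul_div_assoc', div_self (ne_of_gt hn1R), mul_one]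
      exact_mod_cast (by omega : c i0 + w = b2)
    · intro i
      have hform : atkProb τ i
          = (∑ r : Fin n1, (((P r).filter (fun e => e.1 = i)).card : ℝ)) / n1 := by
        unfold atkProb
        rw [← fiberSum P (fun T => (((T.filter (fun e => e.1 = i)).card : ℝ))), Finset.sum_div]
        apply Finset.sum_congr rfl
        intro T _
        rw [hτ T]; ring
      rw [hform]
      have hsplit : ∀ r : Fin n1, (((P r).filter (fun e => e.1 = i)).card : ℝ)
          = ((T0.filter (fun e => e.1 = i)).card : ℝ)
            + (((W r).filter (fun e => e.1 = i)).card : ℝ) := by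
        intro r
        rw [hP r, Finset.filter_union,
          Finset.card_union_of_disjoint (Finset.disjoint_filter_filter (hdisj r))]
        push_cast; ring
      rw [Finset.sum_congr rfl fun r _ => hsplit r, Finset.sum_add_distrib]
      by_cases hi : i = i0
      · subst hi
        have hT0c : ((T0.filter (fun e => e.1 = i)).card : ℝ) = c i := by
          rw [Finset.filter_true_of_mem hT0fst]
          exact_mod_cast congrArg Nat.cast hT0card
        have hWc : ∀ r, (((W r).filter (fun e => e.1 = i)).card : ℝ) = 0 := by
          intro r
          rw [Finset.filter_false_of_mem (fun e he => hWfst r e he)]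
          simp
        rw [Finset.sum_congr rfl fun r _ => hT0c, Finset.sum_congr rfl fun r _ => hWc r]
        rw [if_pos rfl]
        simp only [Finset.sum_const, Finset.card_univ, Fintype.card_fin, nsmul_eq_mul,
          mul_zero, add_zero]
        rw [mul_comm, mul_div_assoc, div_self (ne_of_gt hn1R), mul_one]
      · obtain ⟨k, hk⟩ := hψsurj i hi
        have hT0c : ((T0.filter (fun e => e.1 = i)).card : ℝ) = 0 := by
          rw [Finset.filter_false_of_mem
            (fun e he => by rw [hT0fst e he]; exact fun h => hi h.symm)]
          simp
        have hWc : ∀ r, (((W r).filter (fun e => e.1 = i)).card : ℝ)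
            = ∑ u : Fin w, (if r + ((u:ℕ) : Fin n1) = k then (1:ℝ) else 0) := by
          intro r
          rw [hW r, Finset.filter_image,
            Finset.card_image_of_injOn (Function.Injective.injOn (hfinj r)), Finset.card_filter]
          push_cast
          apply Finset.sum_congr rfl
          intro u _
          congr 1
          rw [hf1]
          simp only [eq_iff_iff]
          constructor
          · intro h; exact hψinj (h.trans hk.symm)
          · intro h; rw [h, hk]
        rw [Finset.sum_congr rfl fun r _ => hT0c, Finset.sum_congr rfl fun r _ => hWc r]
        rw [Finset.sum_comm]
        have hinner : ∀ u : Fin w,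
            ∑ r : Fin n1, (if r + ((u:ℕ) : Fin n1) = k then (1:ℝ) else 0) = 1 := by
          intro u
          have h3 : ∀ r : Fin n1, (if r + ((u:ℕ) : Fin n1) = k then (1:ℝ) else 0)
              = (if r = k - ((u:ℕ) : Fin n1) then (1:ℝ) else 0) := by
            intro r
            congr 1
            simp only [eq_iff_iff]
            exact eq_sub_iff_add_eq.symm
          rw [Finset.sum_congr rfl fun r _ => h3 r,
            Finset.sum_ite_eq' univ _ (fun _ => (1:ℝ))]
          simp
        rw [Finset.sum_congr rfl fun u _ => hinner u]
        rw [if_neg hi]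
        simp only [Finset.sum_const, Finset.card_univ, Fintype.card_fin, nsmul_eq_mul,
          mul_zero, mul_one, zero_add]

end Tau

section Main
variable {n b1 b2 : ℕ} {c : Fin n → ℕ} {lam : Fin b1 → ℝ}

lemma U_bound {σ : Pos n b1 → ℝ} (hσ : MixedInsp n b1 σ) (hl0 : ∀ j, 0 ≤ lam j)
    {τ : Finset (Component n c) → ℝ} (hτ : MixedAtk n b2 c τ) :
    U c lam σ τ ≤ b2 := by
  unfold U
  calc ∑ i, atkProb τ i * (1 - detProb lam σ i) ≤ ∑ i, atkProb τ i := by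
        apply Finset.sum_le_sum
        intro i _
        have h1 := atkProb_nonneg hτ i
        have h2 := detProb_nonneg hσ hl0 i
        nlinarith
    _ ≤ b2 := sum_atkProb_le hτ

lemma bddAbove_S {σ : Pos n b1 → ℝ} (hσ : MixedInsp n b1 σ) (hl0 : ∀ j, 0 ≤ lam j) :
    BddAbove {x | ∃ τ, MixedAtk n b2 c τ ∧ x = U c lam σ τ} := by
  refine ⟨b2, ?_⟩
  rintro x ⟨τ, hτ, rfl⟩
  exact U_bound hσ hl0 hτ

lemma U_form {σ : Pos n b1 → ℝ} {τ : Finset (Component n c) → ℝ} (i0 : Fin n) (A B : ℝ)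
    (hq : ∀ i, atkProb τ i = if i = i0 then A else B) :
    U c lam σ τ = B * ((n:ℝ) - ∑ i, detProb lam σ i)
      + (A - B) * (1 - detProb lam σ i0) := by
  unfold U
  rw [Finset.sum_congr rfl fun i _ => by rw [hq i]]
  have h1 : ∀ i : Fin n, (if i = i0 then A else B) * (1 - detProb lam σ i)
      = B * (1 - detProb lam σ i)
        + (if i = i0 then (A - B) * (1 - detProb lam σ i) else 0) := by
    intro i; split <;> ring
  rw [Finset.sum_congr rfl fun i _ => h1 i, Finset.sum_add_distrib,
    Finset.sum_ite_eq' univ i0 (fun i => (A - B) * (1 - detProb lam σ i))]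
  simp only [Finset.mem_univ, if_true]
  have h2 : ∑ i : Fin n, B * (1 - detProb lam σ i)
      = B * ((n:ℝ) - ∑ i, detProb lam σ i) := by
    rw [← Finset.mul_sum]
    congr 1
    rw [Finset.sum_sub_distrib, Finset.sum_const, Finset.card_univ, Fintype.card_fin,
      nsmul_eq_mul, mul_one]
  rw [h2]

lemma equil_iff (hn : 1 ≤ n) (hb1n : b1 ≤ n)
    (hc : Antitone c) (hcpos : ∀ i, 1 ≤ c i)
    (hlam01 : ∀ j, 0 < lam j ∧ lam j ≤ 1)
    (hb2 : 1 ≤ b2) (hlt : b2 < n * c ⟨n - 1, by omega⟩) (σ : Pos n b1 → ℝ) :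
    IsEquilInsp n b1 b2 c lam σ ↔
      (MixedInsp n b1 σ ∧ ∀ i, detProb lam σ i = (∑ j, lam j) / n) := by
  classical
  haveI : Nonempty (Fin n) := ⟨⟨0, by omega⟩⟩
  have hl0 : ∀ j, 0 ≤ lam j := fun j => (hlam01 j).1.le
  set Λ : ℝ := ∑ j, lam j with hΛ
  have hΛ0 : 0 ≤ Λ := Finset.sum_nonneg fun j _ => hl0 j
  have hnR : (0:ℝ) < n := by exact_mod_cast hn
  have hΛn : Λ ≤ n := by
    calc Λ ≤ ∑ _j : Fin b1, (1:ℝ) := Finset.sum_le_sum fun j _ => (hlam01 j).2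
      _ = b1 := by simp
      _ ≤ n := by exact_mod_cast hb1n
  set V : ℝ := b2 * (1 - Λ / n) with hV
  have key : ∀ σ' : Pos n b1 → ℝ, MixedInsp n b1 σ' → ∀ i0 : Fin n,
      ∃ x ∈ {x | ∃ τ, MixedAtk n b2 c τ ∧ x = U c lam σ' τ}, ∃ D : ℝ, 0 < D ∧
        V + D * (Λ / n - detProb lam σ' i0) ≤ x := by
    intro σ' hσ' i0
    obtain ⟨τ, hτ, A, B, hB0, hBA, hAB, hq⟩ := tau_exists hn hc hcpos hb2 hlt i0
    refine ⟨U c lam σ' τ, ⟨τ, hτ, rfl⟩, A - B, by linarith, ?_⟩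
    have hx := U_form (σ := σ') (lam := lam) i0 A B hq
    have hs := sum_detProb_le hσ' hl0
    rw [← hΛ] at hs
    have hident : B * ((n:ℝ) - ∑ i, detProb lam σ' i) + (A - B) * (1 - detProb lam σ' i0)
        - ((A + ((n:ℝ)-1) * B) * (1 - Λ/n) + (A - B) * (Λ/n - detProb lam σ' i0))
        = B * (Λ - ∑ i, detProb lam σ' i) := by
      field_simp
      ring
    have hBnn : 0 ≤ B * (Λ - ∑ i, detProb lam σ' i) := mul_nonneg hB0 (by linarith)
    rw [hx, hV, ← hAB]
    linarith
  have hub : ∀ σ' : Pos n b1 → ℝ, MixedInsp n b1 σ' → (∀ i, detProb lam σ' i = Λ / n) →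
      ∀ x ∈ {x | ∃ τ, MixedAtk n b2 c τ ∧ x = U c lam σ' τ}, x ≤ V := by
    intro σ' hσ' hp x hx
    obtain ⟨τ, hτ, rfl⟩ := hx
    unfold U
    rw [Finset.sum_congr rfl fun i _ => by rw [hp i], ← Finset.sum_mul]
    have h1 : ∑ i, atkProb τ i ≤ (b2:ℝ) := sum_atkProb_le hτ
    have h2 : 0 ≤ 1 - Λ / n := by
      rw [sub_nonneg, div_le_one hnR]; exact hΛn
    rw [hV]
    exact mul_le_mul_of_nonneg_right h1 h2
  have hne : ∀ σ' : Pos n b1 → ℝ,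
      {x | ∃ τ, MixedAtk n b2 c τ ∧ x = U c lam σ' τ}.Nonempty := by
    intro σ'
    obtain ⟨τ, hτ, _⟩ := tau_exists (c := c) hn hc hcpos hb2 hlt ⟨0, by omega⟩
    exact ⟨U c lam σ' τ, τ, hτ, rfl⟩
  have hsumconst : ∑ _i : Fin n, Λ / n = Λ := by
    rw [Finset.sum_const, Finset.card_univ, Fintype.card_fin, nsmul_eq_mul]
    field_simp
  have hminex : ∀ σ' : Pos n b1 → ℝ, MixedInsp n b1 σ' →
      ∃ i0, detProb lam σ' i0 ≤ Λ / n := by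
    intro σ' hσ'
    by_contra hA
    push_neg at hA
    have h1 : ∑ _i : Fin n, Λ / n < ∑ i, detProb lam σ' i :=
      Finset.sum_lt_sum_of_nonempty Finset.univ_nonempty fun i _ => hA i
    have h3 := sum_detProb_le hσ' hl0
    rw [← hΛ] at h3
    rw [hsumconst] at h1
    linarith
  have hlb : ∀ σ' : Pos n b1 → ℝ, MixedInsp n b1 σ' →
      V ≤ sSup {x | ∃ τ, MixedAtk n b2 c τ ∧ x = U c lam σ' τ} := by
    intro σ' hσ'
    obtain ⟨i0, hi0⟩ := hminex σ' hσ'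
    obtain ⟨x, hxmem, D, hD, hVx⟩ := key σ' hσ' i0
    have hprod : 0 ≤ D * (Λ / n - detProb lam σ' i0) :=
      mul_nonneg hD.le (by linarith)
    have h1 : V ≤ x := by linarith
    exact h1.trans (le_csSup (bddAbove_S hσ' hl0) hxmem)
  have hstrict : ∀ σ' : Pos n b1 → ℝ, MixedInsp n b1 σ' →
      (¬ ∀ i, detProb lam σ' i = Λ / n) →
      V < sSup {x | ∃ τ, MixedAtk n b2 c τ ∧ x = U c lam σ' τ} := by
    intro σ' hσ' hnot
    have hex : ∃ i0, detProb lam σ' i0 < Λ / n := by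
      by_contra hA
      push_neg at hA
      apply hnot
      intro i
      by_contra hne2
      have h1 : ∑ _i : Fin n, Λ / n < ∑ i, detProb lam σ' i :=
        Finset.sum_lt_sum (fun i _ => hA i)
          ⟨i, Finset.mem_univ i, lt_of_le_of_ne (hA i) (Ne.symm hne2)⟩
      have h3 := sum_detProb_le hσ' hl0
      rw [← hΛ] at h3
      rw [hsumconst] at h1
      linarith
    obtain ⟨i0, hi0⟩ := hex
    obtain ⟨x, hxmem, D, hD, hVx⟩ := key σ' hσ' i0
    have hprod : 0 < D * (Λ / n - detProb lam σ' i0) :=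
      mul_pos hD (by linarith)
    have h1 : V < x := by linarith
    exact lt_of_lt_of_le h1 (le_csSup (bddAbove_S hσ' hl0) hxmem)
  constructor
  · rintro ⟨hσ, hmin⟩
    refine ⟨hσ, ?_⟩
    by_contra hnot
    obtain ⟨σs, hσs, hps⟩ := exists_equalizer (lam := lam) hn hb1n
    have h1 := hmin σs hσs
    have h2 : sSup {x | ∃ τ, MixedAtk n b2 c τ ∧ x = U c lam σs τ} ≤ V :=
      csSup_le (hne σs) (hub σs hσs (fun i => by rw [hps i]))
    have h3 := hstrict σ hσ hnot
    linarith
  · rintro ⟨hσ, hp⟩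
    refine ⟨hσ, fun σ' hσ' => ?_⟩
    have h1 : sSup {x | ∃ τ, MixedAtk n b2 c τ ∧ x = U c lam σ τ} ≤ V :=
      csSup_le (hne σ) (hub σ hσ hp)
    exact h1.trans (hlb σ' hσ')

end Main

/-- **Corollary 1.** With disjoint monitoring sets, the set of equilibrium
inspection strategies is the same for every attacker budget `b2` with `1 ≤ b2 < n·c_n`. -/
theorem equil_insp_independent_of_budget (n b1 : ℕ) (hn : 1 ≤ n) (hb1n : b1 ≤ n)
    (c : Fin n → ℕ) (hc : Antitone c) (hcpos : ∀ i, 1 ≤ c i)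
    (lam : Fin b1 → ℝ) (hlam : Antitone lam) (hlam01 : ∀ j, 0 < lam j ∧ lam j ≤ 1)
    (b2 b2' : ℕ) (hb2 : 1 ≤ b2) (hb2' : 1 ≤ b2')
    (hlt : b2 < n * c ⟨n - 1, by omega⟩) (hlt' : b2' < n * c ⟨n - 1, by omega⟩) :
    ∀ σ : Pos n b1 → ℝ,
      IsEquilInsp n b1 b2 c lam σ ↔ IsEquilInsp n b1 b2' c lam σ := by
  intro σ
  rw [equil_iff hn hb1n hc hcpos hlam01 hb2 hlt σ,
    equil_iff hn hb1n hc hcpos hlam01 hb2' hlt' σ]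
end

section
/- In the disjoint case with uniform monitoring set sizes (c_1 = ... = c_n = c) and b2 < n·c, one has k* = n, and the value of the game simplifies to b2·(1 - (1/n)·Σ_{j=1}^{min(b1,n)} λ_j) when b2/n ≤ c, i.e., the expected number of undetected attacks equals b2 times one minus the average deployed detection probability. -/
open Finset

lemma card_filter_ge (n k : ℕ) :
    (Finset.univ.filter (fun j : Fin n => k ≤ (j:ℕ))).card = n - k := by
  rw [← Finset.card_image_of_injective _ Fin.val_injective]
  have : (Finset.univ.filter (fun j : Fin n => k ≤ (j:ℕ))).image Fin.val
      = (Finset.range n).filter (fun j => k ≤ j) := by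
    ext x
    simp only [Finset.mem_image, Finset.mem_filter, Finset.mem_univ, true_and,
      Finset.mem_range]
    constructor
    · rintro ⟨a, ha, rfl⟩; exact ⟨a.isLt, ha⟩
    · rintro ⟨hx, hk⟩; exact ⟨⟨x, hx⟩, hk, rfl⟩
  rw [this, Finset.range_eq_Ico, Finset.Ico_filter_le, Nat.card_Ico]
  simp

lemma tailZ_const (n cc k : ℕ) : tailZ n (fun _ => cc) k = ((n - k : ℕ) : ℤ) * cc := by
  unfold tailZ
  rw [Finset.sum_const, card_filter_ge, nsmul_eq_mul]

lemma kstar_const (n b2 cc : ℕ) (hn : 1 ≤ n) (hb2lt : b2 < n * cc) :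
    kstar n b2 (fun _ => cc) = n := by
  unfold kstar
  apply le_antisymm
  · apply Nat.sInf_le
    refine ⟨hn, le_refl n, ?_⟩
    rw [tailZ_const]
    unfold cext
    rw [dif_neg (lt_irrefl n)]
    simp
  · apply le_csInf
    · refine ⟨n, hn, le_refl n, ?_⟩
      rw [tailZ_const]
      unfold cext
      rw [dif_neg (lt_irrefl n)]
      simp
    · rintro k ⟨hk1, hkn, hcond⟩
      by_contra hlt
      push_neg at hlt
      rw [tailZ_const] at hcond
      unfold cext at hcond
      rw [dif_pos hlt] at hcond
      have : (n * cc : ℤ) ≤ b2 := by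
        have hnk : ((n - k : ℕ) : ℤ) = (n : ℤ) - k := by
          have := Nat.sub_add_cancel hlt.le
          push_cast
          omega
        rw [hnk] at hcond
        nlinarith
      have : (b2 : ℤ) < n * cc := by exact_mod_cast hb2lt
      omega

/-- With uniform monitoring-set sizes `c` and `b2 < n·c`, one has
`k* = n` and the value simplifies to `b2·(1 - (1/n)·Σ_{j=1}^{b1} λ_j)`. -/
theorem uniform_sizes_value (n b1 b2 cc : ℕ) (hn : 1 ≤ n) (hb1n : b1 ≤ n) (hcc : 1 ≤ cc)
    (lam : Fin b1 → ℝ) (hlam : Antitone lam) (hlam01 : ∀ j, 0 < lam j ∧ lam j ≤ 1)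
    (hb2 : 1 ≤ b2) (hb2lt : b2 < n * cc) (hdiv : (b2 : ℝ) / n ≤ (cc : ℝ)) :
    kstar n b2 (fun _ => cc) = n ∧
    valueFormula n b1 b2 (fun _ => cc) lam = (b2 : ℝ) * (1 - (∑ j, lam j) / n) := by
  have hks : kstar n b2 (fun _ => cc) = n := kstar_const n b2 cc hn hb2lt
  refine ⟨hks, ?_⟩
  unfold valueFormula
  rw [hks, tailZ_const]
  have hn0 : (n : ℝ) ≠ 0 := by positivity
  have hmin : ∀ j : Fin b1,
      min ((cext n (fun _ => cc) (j : ℕ) : ℝ)) (((b2 : ℝ) - (((n - n : ℕ) : ℤ) * cc : ℤ)) / n)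
        = (b2 : ℝ) / n := by
    intro j
    have hjn : (j : ℕ) < n := lt_of_lt_of_le j.isLt hb1n
    have : cext n (fun _ => cc) (j : ℕ) = (cc : ℤ) := by unfold cext; rw [dif_pos hjn]
    rw [this]
    simp only [Nat.sub_self, Nat.cast_zero, Int.cast_zero, Int.cast_natCast, zero_mul, sub_zero]
    exact min_eq_right hdiv
  rw [Finset.sum_congr rfl (fun j _ => by rw [hmin j])]
  rw [← Finset.sum_mul]
  field_simp
end
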